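/- arXiv:2509.12218 — 5 statements merged into one kernel-verified Lean document; each statement's English description precedes it below -/
import Mathlib

section
/- For 0 < α < 1 and λ > 0, the kernel pair M(x) = λ^(α-1) x^(α-1) e^(-λx)/Γ(α) and K(x) = λ(λx)^(-α) e^(-λx)/Γ(1-α) + (λ/Γ(1-α)) γ(1-α, λx), where γ is the lower incomplete gamma function, satisfies the Sonin condition ∫₀ˣ M(x - z) K(z) dz = 1 for all x > 0. -/
open Real MeasureTheory

/-- Lower incomplete gamma function `γ(s, x) = ∫₀ˣ t^(s-1) e^(-t) dt`. -/
noncomputable def lowerIncGamma (s x : ℝ) : ℝ :=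
  ∫ t in (0 : ℝ)..x, t ^ (s - 1) * Real.exp (-t)

namespace SoninAux
open Set ENNReal

variable {α lam : ℝ}

lemma g_int (hα1 : α < 1) (lam a b : ℝ) :
    IntervalIntegrable (fun u => u ^ (-α) * Real.exp (-(lam * u))) volume a b :=
  (intervalIntegral.intervalIntegrable_rpow' (by linarith)).mul_continuousOn
    (Continuous.continuousOn (by fun_prop))

lemma h_int (hα0 : 0 < α) (lam a b : ℝ) :
    IntervalIntegrable (fun w => w ^ (α - 1) * Real.exp (-(lam * w))) volume a b :=
  (intervalIntegral.intervalIntegrable_rpow' (by linarith)).mul_continuousOn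
    (Continuous.continuousOn (by fun_prop))

lemma hx_int (hα0 : 0 < α) (lam x : ℝ) :
    IntervalIntegrable (fun z => (x - z) ^ (α - 1) * Real.exp (-(lam * (x - z)))) volume 0 x := by
  have := (h_int hα0 lam 0 x).comp_sub_left x
  simpa using this.symm

lemma beta01 (hα0 : 0 < α) (hα1 : α < 1) :
    ∫ t in (0:ℝ)..1, t ^ (-α) * (1 - t) ^ (α - 1) = Real.Gamma (1 - α) * Real.Gamma α := by
  have h := Complex.Gamma_mul_Gamma_eq_betaIntegral (s := ((1 - α : ℝ) : ℂ)) (t := ((α : ℝ) : ℂ))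
    (by simpa using by linarith : 0 < Complex.re ((1 - α : ℝ) : ℂ))
    (by simpa using hα0)
  have hsum : ((1 - α : ℝ) : ℂ) + ((α : ℝ) : ℂ) = 1 := by push_cast; ring
  rw [hsum, Complex.Gamma_one, one_mul] at h
  have hval : Complex.betaIntegral ((1 - α : ℝ) : ℂ) ((α : ℝ) : ℂ)
      = ((∫ t in (0:ℝ)..1, t ^ (-α) * (1 - t) ^ (α - 1) : ℝ) : ℂ) := by
    rw [Complex.betaIntegral, ← intervalIntegral.integral_ofReal]
    refine intervalIntegral.integral_congr fun t ht => ?_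
    rw [Set.uIcc_of_le (by norm_num : (0:ℝ) ≤ 1)] at ht
    rw [Complex.ofReal_mul, Complex.ofReal_cpow ht.1, Complex.ofReal_cpow (by linarith [ht.2])]
    push_cast
    ring_nf
  rw [hval] at h
  have := h.symm
  rw [Complex.Gamma_ofReal, Complex.Gamma_ofReal, ← Complex.ofReal_mul] at this
  exact Complex.ofReal_inj.1 this

lemma beta_v (hα0 : 0 < α) (hα1 : α < 1) {v : ℝ} (hv : 0 < v) :
    ∫ z in (0:ℝ)..v, z ^ (-α) * (v - z) ^ (α - 1) = Real.Gamma (1 - α) * Real.Gamma α := by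
  have hscale := intervalIntegral.integral_comp_mul_right
    (f := fun z => z ^ (-α) * (v - z) ^ (α - 1)) (a := 0) (b := 1) (c := v) hv.ne'
  simp only [zero_mul, one_mul] at hscale
  -- hscale : ∫ t in 0..1, ((t*v)^(-α) * (v - t*v)^(α-1)) = v⁻¹ • ∫ z in 0..v, ...
  have hcongr : ∫ t in (0:ℝ)..1, ((t * v) ^ (-α) * (v - t * v) ^ (α - 1))
      = ∫ t in (0:ℝ)..1, v⁻¹ * (t ^ (-α) * (1 - t) ^ (α - 1)) := by
    refine intervalIntegral.integral_congr fun t ht => ?_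
    rw [Set.uIcc_of_le (by norm_num : (0:ℝ) ≤ 1)] at ht
    have h1 : (t * v) ^ (-α) = t ^ (-α) * v ^ (-α) := Real.mul_rpow ht.1 hv.le
    have h2 : v - t * v = v * (1 - t) := by ring
    have h3 : (v * (1 - t)) ^ (α - 1) = v ^ (α - 1) * (1 - t) ^ (α - 1) :=
      Real.mul_rpow hv.le (by linarith [ht.2])
    have h4 : v ^ (-α) * v ^ (α - 1) = v⁻¹ := by
      rw [← Real.rpow_add hv, show -α + (α - 1) = -1 by ring, Real.rpow_neg_one]
    rw [h1, h2, h3]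
    calc t ^ (-α) * v ^ (-α) * (v ^ (α - 1) * (1 - t) ^ (α - 1))
        = (v ^ (-α) * v ^ (α - 1)) * (t ^ (-α) * (1 - t) ^ (α - 1)) := by ring
      _ = v⁻¹ * (t ^ (-α) * (1 - t) ^ (α - 1)) := by rw [h4]
  rw [hcongr, intervalIntegral.integral_const_mul, beta01 hα0 hα1, smul_eq_mul] at hscale
  have hv' : v⁻¹ ≠ 0 := inv_ne_zero hv.ne'
  field_simp at hscale
  linarith [hscale]

lemma beta_exp (hα0 : 0 < α) (hα1 : α < 1) (lam : ℝ) {z : ℝ} (hz : 0 < z) :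
    ∫ u in (0:ℝ)..z, (u ^ (-α) * Real.exp (-(lam * u))) *
        ((z - u) ^ (α - 1) * Real.exp (-(lam * (z - u))))
      = Real.Gamma (1 - α) * Real.Gamma α * Real.exp (-(lam * z)) := by
  have hcongr : ∀ u : ℝ, (u ^ (-α) * Real.exp (-(lam * u))) *
      ((z - u) ^ (α - 1) * Real.exp (-(lam * (z - u))))
      = Real.exp (-(lam * z)) * (u ^ (-α) * (z - u) ^ (α - 1)) := by
    intro u
    rw [show (u ^ (-α) * Real.exp (-(lam * u))) * ((z - u) ^ (α - 1) * Real.exp (-(lam * (z - u))))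
      = (Real.exp (-(lam * u)) * Real.exp (-(lam * (z - u)))) * (u ^ (-α) * (z - u) ^ (α - 1))
      from by ring, ← Real.exp_add, show -(lam * u) + -(lam * (z - u)) = -(lam * z) from by ring]
  simp only [hcongr]
  rw [intervalIntegral.integral_const_mul, beta_v hα0 hα1 hz]
  ring

lemma A4 (hα0 : 0 < α) (hα1 : α < 1) {x : ℝ} (hx : 0 < x) :
    IntegrableOn (fun z => z ^ (-α) * (x - z) ^ (α - 1)) (Ioc 0 x) volume := by
  have m1 : Measurable fun z : ℝ => z ^ (-α) * (x - z) ^ (α - 1) :=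
    (measurable_id.pow measurable_const).mul
      ((measurable_const.sub measurable_id).pow measurable_const)
  have p1 : IntegrableOn (fun z => z ^ (-α) * (x - z) ^ (α - 1)) (Ioc 0 (x / 2)) volume := by
    have hb : IntegrableOn (fun z : ℝ => (x / 2) ^ (α - 1) * z ^ (-α)) (Ioc 0 (x / 2)) volume :=
      ((intervalIntegral.intervalIntegrable_rpow' (by linarith : (-1:ℝ) < -α)).const_mul
        ((x / 2) ^ (α - 1))).1
    refine Integrable.mono hb m1.aestronglyMeasurable ?_
    refine (ae_restrict_iff' measurableSet_Ioc).2 (Filter.Eventually.of_forall fun z hz => ?_)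
    have hz0 : 0 < z := hz.1
    have h1 : (x - z) ^ (α - 1) ≤ (x / 2) ^ (α - 1) :=
      Real.rpow_le_rpow_of_nonpos (by linarith) (by linarith [hz.2]) (by linarith)
    rw [Real.norm_eq_abs, Real.norm_eq_abs,
      abs_of_nonneg (mul_nonneg (Real.rpow_nonneg hz0.le _) (Real.rpow_nonneg (by linarith [hz.2]) _)),
      abs_of_nonneg (mul_nonneg (Real.rpow_nonneg (by linarith) _) (Real.rpow_nonneg hz0.le _)),
      mul_comm ((x / 2) ^ (α - 1))]
    exact mul_le_mul_of_nonneg_left h1 (Real.rpow_nonneg hz0.le _)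
  have p2 : IntegrableOn (fun z => z ^ (-α) * (x - z) ^ (α - 1)) (Ioc (x / 2) x) volume := by
    have hb : IntegrableOn (fun z : ℝ => (x / 2) ^ (-α) * (x - z) ^ (α - 1))
        (Ioc (x / 2) x) volume := by
      have h2 := ((intervalIntegral.intervalIntegrable_rpow'
        (by linarith : (-1:ℝ) < α - 1)).comp_sub_left (a := 0) (b := x / 2) x)
      simp only [sub_zero] at h2
      rw [show x - x / 2 = x / 2 by ring] at h2
      exact (h2.symm.const_mul ((x / 2) ^ (-α))).1
    refine Integrable.mono hb m1.aestronglyMeasurable ?_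
    refine (ae_restrict_iff' measurableSet_Ioc).2 (Filter.Eventually.of_forall fun z hz => ?_)
    have h1 : z ^ (-α) ≤ (x / 2) ^ (-α) :=
      Real.rpow_le_rpow_of_nonpos (by linarith) hz.1.le (by linarith)
    rw [Real.norm_eq_abs, Real.norm_eq_abs,
      abs_of_nonneg (mul_nonneg (Real.rpow_nonneg (by linarith [hz.1]) _) (Real.rpow_nonneg (by linarith [hz.2]) _)),
      abs_of_nonneg (mul_nonneg (Real.rpow_nonneg (by linarith) _) (Real.rpow_nonneg (by linarith [hz.2]) _))]
    exact mul_le_mul_of_nonneg_right h1 (Real.rpow_nonneg (by linarith [hz.2]) _)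
  have := p1.union p2
  rwa [Set.Ioc_union_Ioc_eq_Ioc (by linarith) (by linarith)] at this

lemma exp_integral (hlam : 0 < lam) (x : ℝ) :
    ∫ z in (0:ℝ)..x, Real.exp (-(lam * z)) = (1 - Real.exp (-(lam * x))) / lam := by
  have hder : ∀ z : ℝ, HasDerivAt (fun z : ℝ => -Real.exp (-(lam * z)) / lam)
      (Real.exp (-(lam * z))) z := by
    intro z
    have h1 : HasDerivAt (fun z : ℝ => -(lam * z)) (-lam) z := by
      simpa using ((hasDerivAt_id z).const_mul lam).fun_neg
    have h2 := (Real.hasDerivAt_exp (-(lam * z))).comp z h1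
    have h3 : HasDerivAt (fun z : ℝ => -Real.exp (-(lam * z)) / lam)
        (-(Real.exp (-(lam * z)) * -lam) / lam) z := h2.neg.div_const lam
    convert h3 using 1
    rw [mul_neg, neg_neg, mul_div_assoc, div_self hlam.ne', mul_one]
  rw [intervalIntegral.integral_eq_sub_of_hasDerivAt (fun z _ => hder z)
    ((Real.continuous_exp.comp (by fun_prop)).intervalIntegrable 0 x)]
  field_simp
  rw [mul_zero, neg_zero, Real.exp_zero]
  ring

lemma lint_shift (f : ℝ → ℝ≥0∞) (u x : ℝ) :
    ∫⁻ z in Ioc u x, f (z - u) = ∫⁻ w in Ioc 0 (x - u), f w := by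
  rw [← lintegral_indicator measurableSet_Ioc, ← lintegral_indicator measurableSet_Ioc]
  have key : ∀ z : ℝ, (Ioc u x).indicator (fun z => f (z - u)) z
      = (Ioc 0 (x - u)).indicator f (z - u) := by
    intro z
    by_cases h : z ∈ Ioc u x
    · rw [Set.indicator_of_mem h, Set.indicator_of_mem
        (by exact ⟨by linarith [h.1], by linarith [h.2]⟩)]
    · rw [Set.indicator_of_notMem h, Set.indicator_of_notMem (by
        intro hc
        exact h ⟨by linarith [hc.1], by linarith [hc.2]⟩)]
  simp_rw [key, sub_eq_add_neg]
  exact lintegral_add_right_eq_self (fun w => (Ioc 0 (x - u)).indicator f w) (-u)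

lemma lig_eq (hα1 : α < 1) (hlam : 0 < lam) {z : ℝ} (hz : 0 ≤ z) :
    lowerIncGamma (1 - α) (lam * z)
      = lam ^ (1 - α) * ∫ u in (0:ℝ)..z, u ^ (-α) * Real.exp (-(lam * u)) := by
  unfold lowerIncGamma
  simp only [show (1 - α) - 1 = -α from by ring]
  have hs := intervalIntegral.integral_comp_mul_left
    (f := fun t => t ^ (-α) * Real.exp (-t)) (a := 0) (b := z) (c := lam) hlam.ne'
  simp only [mul_zero, smul_eq_mul] at hs
  have hc : ∫ u in (0:ℝ)..z, ((lam * u) ^ (-α) * Real.exp (-(lam * u)))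
      = lam ^ (-α) * ∫ u in (0:ℝ)..z, u ^ (-α) * Real.exp (-(lam * u)) := by
    rw [← intervalIntegral.integral_const_mul]
    refine intervalIntegral.integral_congr fun u hu => ?_
    rw [Set.uIcc_of_le hz] at hu
    rw [Real.mul_rpow hlam.le hu.1]
    ring
  rw [hc] at hs
  have hpow : lam * lam ^ (-α) = lam ^ (1 - α) := by
    rw [show (1:ℝ) - α = 1 + -α from by ring, Real.rpow_add hlam, Real.rpow_one]
  have : ∫ t in (0:ℝ)..(lam * z), t ^ (-α) * Real.exp (-t)
      = lam * (lam ^ (-α) * ∫ u in (0:ℝ)..z, u ^ (-α) * Real.exp (-(lam * u))) := by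
    rw [hs, ← mul_assoc, mul_inv_cancel₀ hlam.ne', one_mul]
  rw [this, ← mul_assoc, hpow]

lemma lint_ne_top {f : ℝ → ℝ} {s : Set ℝ} (hf : IntegrableOn f s) :
    ∫⁻ z in s, ENNReal.ofReal (f z) ≠ ⊤ := by
  refine ne_of_lt (lt_of_le_of_lt ?_ hf.hasFiniteIntegral)
  refine lintegral_mono fun z => ?_
  rw [Real.enorm_eq_ofReal_abs]
  exact ENNReal.ofReal_le_ofReal (le_abs_self _)

lemma mg (α lam : ℝ) : Measurable (fun u : ℝ => u ^ (-α) * Real.exp (-(lam * u))) :=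
  (measurable_id.pow measurable_const).mul (by fun_prop)

lemma mh (α lam : ℝ) : Measurable (fun w : ℝ => w ^ (α - 1) * Real.exp (-(lam * w))) :=
  (measurable_id.pow measurable_const).mul (by fun_prop)

lemma mhx (α lam x : ℝ) :
    Measurable (fun z : ℝ => (x - z) ^ (α - 1) * Real.exp (-(lam * (x - z)))) :=
  (((measurable_const.sub measurable_id).pow measurable_const)).mul (by fun_prop)

lemma hfin1 (hα0 : 0 < α) (hα1 : α < 1) (hlam : 0 < lam) {x : ℝ} (hx : 0 < x) :
    (∫⁻ u in Ioc 0 x, ∫⁻ z in Ioc u x, ENNReal.ofReal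
        (((x - z) ^ (α - 1) * Real.exp (-(lam * (x - z)))) *
          (u ^ (-α) * Real.exp (-(lam * u))))) ≠ ⊤ := by
  set C := ∫⁻ z in Ioc (0:ℝ) x, ENNReal.ofReal ((x - z) ^ (α - 1) * Real.exp (-(lam * (x - z))))
    with hCdef
  have hC : C ≠ ⊤ := lint_ne_top (hx_int hα0 lam x).1
  have hgfin : (∫⁻ u in Ioc (0:ℝ) x, ENNReal.ofReal (u ^ (-α) * Real.exp (-(lam * u)))) ≠ ⊤ :=
    lint_ne_top (g_int hα1 lam 0 x).1
  refine ne_top_of_le_ne_top (ENNReal.mul_ne_top hgfin hC) ?_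
  calc ∫⁻ u in Ioc (0:ℝ) x, ∫⁻ z in Ioc u x, ENNReal.ofReal
        (((x - z) ^ (α - 1) * Real.exp (-(lam * (x - z)))) * (u ^ (-α) * Real.exp (-(lam * u))))
      ≤ ∫⁻ u in Ioc (0:ℝ) x, ENNReal.ofReal (u ^ (-α) * Real.exp (-(lam * u))) * C := by
        refine setLIntegral_mono' measurableSet_Ioc fun u hu => ?_
        calc ∫⁻ z in Ioc u x, ENNReal.ofReal
              (((x - z) ^ (α - 1) * Real.exp (-(lam * (x - z)))) *
                (u ^ (-α) * Real.exp (-(lam * u))))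
            = ∫⁻ z in Ioc u x, ENNReal.ofReal ((x - z) ^ (α - 1) * Real.exp (-(lam * (x - z))))
                * ENNReal.ofReal (u ^ (-α) * Real.exp (-(lam * u))) := by
              refine setLIntegral_congr_fun measurableSet_Ioc
                (fun z hz => ?_)
              rw [← ENNReal.ofReal_mul
                (mul_nonneg (Real.rpow_nonneg (by linarith [hz.2]) _) (Real.exp_pos _).le)]
          _ = (∫⁻ z in Ioc u x, ENNReal.ofReal ((x - z) ^ (α - 1) * Real.exp (-(lam * (x - z)))))
                * ENNReal.ofReal (u ^ (-α) * Real.exp (-(lam * u))) :=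
              lintegral_mul_const'' _ ((ENNReal.measurable_ofReal.comp (mhx α lam x)).aemeasurable)
          _ ≤ C * ENNReal.ofReal (u ^ (-α) * Real.exp (-(lam * u))) := by
              exact mul_le_mul_left (lintegral_mono_set (Set.Ioc_subset_Ioc_left hu.1.le)) _
          _ = ENNReal.ofReal (u ^ (-α) * Real.exp (-(lam * u))) * C := mul_comm _ _
    _ = (∫⁻ u in Ioc (0:ℝ) x, ENNReal.ofReal (u ^ (-α) * Real.exp (-(lam * u)))) * C :=
        lintegral_mul_const'' _ ((ENNReal.measurable_ofReal.comp (mg α lam)).aemeasurable)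
    _ ≤ (∫⁻ u in Ioc (0:ℝ) x, ENNReal.ofReal (u ^ (-α) * Real.exp (-(lam * u)))) * C := le_rfl

lemma hfin2 (hα0 : 0 < α) (hα1 : α < 1) (hlam : 0 < lam) {x : ℝ} (hx : 0 < x) :
    (∫⁻ u in Ioc 0 x, ∫⁻ z in Ioc u x, ENNReal.ofReal
        ((u ^ (-α) * Real.exp (-(lam * u))) *
          ((z - u) ^ (α - 1) * Real.exp (-(lam * (z - u)))))) ≠ ⊤ := by
  set C := ∫⁻ w in Ioc (0:ℝ) x, ENNReal.ofReal (w ^ (α - 1) * Real.exp (-(lam * w))) with hCdef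
  have hC : C ≠ ⊤ := lint_ne_top (h_int hα0 lam 0 x).1
  have hgfin : (∫⁻ u in Ioc (0:ℝ) x, ENNReal.ofReal (u ^ (-α) * Real.exp (-(lam * u)))) ≠ ⊤ :=
    lint_ne_top (g_int hα1 lam 0 x).1
  refine ne_top_of_le_ne_top (ENNReal.mul_ne_top hgfin hC) ?_
  calc ∫⁻ u in Ioc (0:ℝ) x, ∫⁻ z in Ioc u x, ENNReal.ofReal
        ((u ^ (-α) * Real.exp (-(lam * u))) * ((z - u) ^ (α - 1) * Real.exp (-(lam * (z - u)))))
      ≤ ∫⁻ u in Ioc (0:ℝ) x, ENNReal.ofReal (u ^ (-α) * Real.exp (-(lam * u))) * C := by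
        refine setLIntegral_mono' measurableSet_Ioc fun u hu => ?_
        calc ∫⁻ z in Ioc u x, ENNReal.ofReal
              ((u ^ (-α) * Real.exp (-(lam * u))) *
                ((z - u) ^ (α - 1) * Real.exp (-(lam * (z - u)))))
            = ∫⁻ z in Ioc u x, ENNReal.ofReal (u ^ (-α) * Real.exp (-(lam * u)))
                * ENNReal.ofReal ((z - u) ^ (α - 1) * Real.exp (-(lam * (z - u)))) := by
              refine setLIntegral_congr_fun measurableSet_Ioc
                (fun z hz => ?_)
              rw [← ENNReal.ofReal_mul
                (mul_nonneg (Real.rpow_nonneg hu.1.le _) (Real.exp_pos _).le)]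
          _ = ENNReal.ofReal (u ^ (-α) * Real.exp (-(lam * u)))
                * ∫⁻ z in Ioc u x, ENNReal.ofReal
                    ((z - u) ^ (α - 1) * Real.exp (-(lam * (z - u)))) :=
              lintegral_const_mul'' _
                ((ENNReal.measurable_ofReal.comp ((mh α lam).comp
                  (measurable_id.sub measurable_const))).aemeasurable)
          _ = ENNReal.ofReal (u ^ (-α) * Real.exp (-(lam * u)))
                * ∫⁻ w in Ioc 0 (x - u), ENNReal.ofReal (w ^ (α - 1) * Real.exp (-(lam * w))) := by
              rw [lint_shift (fun w => ENNReal.ofReal (w ^ (α - 1) * Real.exp (-(lam * w)))) u x]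
          _ ≤ ENNReal.ofReal (u ^ (-α) * Real.exp (-(lam * u))) * C := by
              exact mul_le_mul_right (lintegral_mono_set
                (Set.Ioc_subset_Ioc_right (by linarith [hu.1]))) _
    _ = (∫⁻ u in Ioc (0:ℝ) x, ENNReal.ofReal (u ^ (-α) * Real.exp (-(lam * u)))) * C :=
        lintegral_mul_const'' _ ((ENNReal.measurable_ofReal.comp (mg α lam)).aemeasurable)
lemma triangle_swap {x : ℝ} {F : ℝ → ℝ → ℝ}
    (hm : Measurable (Function.uncurry F))
    (hpos : ∀ z u, 0 < u → u ≤ z → z ≤ x → 0 ≤ F z u)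
    (hfin : (∫⁻ u in Ioc 0 x, ∫⁻ z in Ioc u x, ENNReal.ofReal (F z u)) ≠ ⊤) :
    (∫ z in Ioc 0 x, ∫ u in Ioc 0 z, F z u) = ∫ u in Ioc 0 x, ∫ z in Ioc u x, F z u := by
  set μ := volume.restrict (Ioc (0:ℝ) x) with hμ
  set J : ℝ → ℝ → ℝ≥0∞ := fun z u => if u ≤ z then ENNReal.ofReal (F z u) else 0 with hJ
  have hJm : Measurable (Function.uncurry J) := by
    refine Measurable.ite ?_ (ENNReal.measurable_ofReal.comp hm) measurable_const
    exact measurableSet_le measurable_snd measurable_fst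
  -- lintegral identities
  have key1 : ∀ z ∈ Ioc (0:ℝ) x, (∫⁻ u, J z u ∂μ) = ∫⁻ u in Ioc 0 z, ENNReal.ofReal (F z u) := by
    intro z hz
    have h1 : J z = (Iic z).indicator fun u => ENNReal.ofReal (F z u) := by
      funext u
      simp only [hJ, Set.indicator_apply, mem_Iic]
    have hset : Iic z ∩ Ioc 0 x = Ioc 0 z := by
      ext u; simp only [mem_inter_iff, mem_Iic, mem_Ioc]; constructor
      · rintro ⟨h1, h2, h3⟩; exact ⟨h2, h1⟩
      · rintro ⟨h1, h2⟩; exact ⟨h2, h1, le_trans h2 hz.2⟩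
    rw [h1, hμ, lintegral_indicator measurableSet_Iic, Measure.restrict_restrict measurableSet_Iic,
      hset]
  have key2 : ∀ u ∈ Ioc (0:ℝ) x, (∫⁻ z, J z u ∂μ) = ∫⁻ z in Ioc u x, ENNReal.ofReal (F z u) := by
    intro u hu
    have h1 : (fun z => J z u) = (Ici u).indicator fun z => ENNReal.ofReal (F z u) := by
      funext z
      simp only [hJ, Set.indicator_apply, mem_Ici]
    rw [h1, hμ, lintegral_indicator measurableSet_Ici, Measure.restrict_restrict measurableSet_Ici]
    have h2 : Ici u ∩ Ioc 0 x = Icc u x := by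
      ext z; simp only [mem_inter_iff, mem_Ici, mem_Ioc, mem_Icc]; constructor
      · rintro ⟨h1, h2, h3⟩; exact ⟨h1, h3⟩
      · rintro ⟨h1, h2⟩; exact ⟨h1, lt_of_lt_of_le hu.1 h1, h2⟩
    rw [h2, ← setLIntegral_congr (Ioc_ae_eq_Icc (a := u) (b := x))]
  have hswap : (∫⁻ z, ∫⁻ u, J z u ∂μ ∂μ) = ∫⁻ u, ∫⁻ z, J z u ∂μ ∂μ :=
    lintegral_lintegral_swap (hJm.aemeasurable)
  have hR : (∫⁻ u, ∫⁻ z, J z u ∂μ ∂μ) = ∫⁻ u in Ioc 0 x, ∫⁻ z in Ioc u x, ENNReal.ofReal (F z u) :=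
    setLIntegral_congr_fun measurableSet_Ioc key2
  have hL : (∫⁻ z, ∫⁻ u, J z u ∂μ ∂μ) = ∫⁻ z in Ioc 0 x, ∫⁻ u in Ioc 0 z, ENNReal.ofReal (F z u) :=
    setLIntegral_congr_fun measurableSet_Ioc key1
  have htot : (∫⁻ z, ∫⁻ u, J z u ∂μ ∂μ) ≠ ⊤ := by rw [hswap, hR]; exact hfin
  -- measurability of inner lintegrals
  have hmL : Measurable fun z => ∫⁻ u, J z u ∂μ :=
    Measurable.lintegral_prod_right' (f := Function.uncurry J) hJm
  have hmR : Measurable fun u => ∫⁻ z, J z u ∂μ :=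
    Measurable.lintegral_prod_left' hJm
  -- Bochner = toReal of lintegral, pointwise
  have bkey1 : ∀ z ∈ Ioc (0:ℝ) x, (∫ u in Ioc 0 z, F z u) = (∫⁻ u, J z u ∂μ).toReal := by
    intro z hz
    rw [key1 z hz]
    rw [integral_eq_lintegral_of_nonneg_ae]
    · exact (ae_restrict_iff' measurableSet_Ioc).2 (Filter.Eventually.of_forall
        fun u hu => hpos z u hu.1 hu.2 hz.2)
    · exact (Measurable.of_uncurry_left hm).aestronglyMeasurable
  have bkey2 : ∀ u ∈ Ioc (0:ℝ) x, (∫ z in Ioc u x, F z u) = (∫⁻ z, J z u ∂μ).toReal := by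
    intro u hu
    rw [key2 u hu]
    rw [integral_eq_lintegral_of_nonneg_ae]
    · exact (ae_restrict_iff' measurableSet_Ioc).2 (Filter.Eventually.of_forall
        fun z hz => hpos z u hu.1 hz.1.le hz.2)
    · exact (Measurable.of_uncurry_right hm).aestronglyMeasurable
  calc (∫ z in Ioc 0 x, ∫ u in Ioc 0 z, F z u)
      = ∫ z in Ioc 0 x, (∫⁻ u, J z u ∂μ).toReal :=
        setIntegral_congr_fun measurableSet_Ioc fun z hz => bkey1 z hz
    _ = (∫⁻ z, ∫⁻ u, J z u ∂μ ∂μ).toReal := by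
        refine integral_toReal hmL.aemeasurable ?_
        exact ae_lt_top hmL htot
    _ = (∫⁻ u, ∫⁻ z, J z u ∂μ ∂μ).toReal := by rw [hswap]
    _ = ∫ u in Ioc 0 x, (∫⁻ z, J z u ∂μ).toReal := by
        refine (integral_toReal hmR.aemeasurable ?_).symm
        refine ae_lt_top hmR ?_
        rw [← hswap]; exact htot
    _ = ∫ u in Ioc 0 x, ∫ z in Ioc u x, F z u :=
        (setIntegral_congr_fun measurableSet_Ioc fun u hu => (bkey2 u hu).symm)

lemma Tval (hα0 : 0 < α) (hα1 : α < 1) (hlam : 0 < lam) {x : ℝ} (hx : 0 < x) :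
    ∫ z in Ioc (0:ℝ) x, (((x - z) ^ (α - 1) * Real.exp (-(lam * (x - z)))) *
        ∫ u in (0:ℝ)..z, u ^ (-α) * Real.exp (-(lam * u)))
      = Real.Gamma (1 - α) * Real.Gamma α * ((1 - Real.exp (-(lam * x))) / lam) := by
  have step1 : ∫ z in Ioc (0:ℝ) x, (((x - z) ^ (α - 1) * Real.exp (-(lam * (x - z)))) *
        ∫ u in (0:ℝ)..z, u ^ (-α) * Real.exp (-(lam * u)))
      = ∫ z in Ioc (0:ℝ) x, ∫ u in Ioc (0:ℝ) z,
          (((x - z) ^ (α - 1) * Real.exp (-(lam * (x - z)))) *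
            (u ^ (-α) * Real.exp (-(lam * u)))) := by
    refine setIntegral_congr_fun measurableSet_Ioc fun z hz => ?_
    rw [intervalIntegral.integral_of_le hz.1.le, ← integral_const_mul]
  rw [step1]
  have hm1 : Measurable (Function.uncurry fun z u : ℝ =>
      ((x - z) ^ (α - 1) * Real.exp (-(lam * (x - z)))) * (u ^ (-α) * Real.exp (-(lam * u)))) :=
    ((mhx α lam x).comp measurable_fst).mul ((mg α lam).comp measurable_snd)
  have hpos1 : ∀ z u : ℝ, 0 < u → u ≤ z → z ≤ x →
      0 ≤ ((x - z) ^ (α - 1) * Real.exp (-(lam * (x - z)))) *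
        (u ^ (-α) * Real.exp (-(lam * u))) := fun z u h1 h2 h3 =>
    mul_nonneg (mul_nonneg (Real.rpow_nonneg (by linarith) _) (Real.exp_pos _).le)
      (mul_nonneg (Real.rpow_nonneg h1.le _) (Real.exp_pos _).le)
  rw [triangle_swap hm1 hpos1 (hfin1 hα0 hα1 hlam hx)]
  have step2 : ∫ u in Ioc (0:ℝ) x, ∫ z in Ioc u x,
        (((x - z) ^ (α - 1) * Real.exp (-(lam * (x - z)))) * (u ^ (-α) * Real.exp (-(lam * u))))
      = ∫ u in Ioc (0:ℝ) x, ∫ z in Ioc u x,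
          ((u ^ (-α) * Real.exp (-(lam * u))) *
            ((z - u) ^ (α - 1) * Real.exp (-(lam * (z - u))))) := by
    refine setIntegral_congr_fun measurableSet_Ioc fun u hu => ?_
    rw [integral_mul_const]
    have e2 : ∫ z in Ioc u x, (x - z) ^ (α - 1) * Real.exp (-(lam * (x - z)))
        = ∫ z in Ioc u x, (z - u) ^ (α - 1) * Real.exp (-(lam * (z - u))) := by
      rw [← intervalIntegral.integral_of_le hu.2, ← intervalIntegral.integral_of_le hu.2,
        intervalIntegral.integral_comp_sub_left
          (fun w => w ^ (α - 1) * Real.exp (-(lam * w))) x,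
        intervalIntegral.integral_comp_sub_right
          (fun w => w ^ (α - 1) * Real.exp (-(lam * w))) u]
      norm_num
    rw [e2, ← integral_mul_const]
    refine setIntegral_congr_fun measurableSet_Ioc fun z hz => ?_
    ring
  rw [step2]
  have hm2 : Measurable (Function.uncurry fun z u : ℝ =>
      (u ^ (-α) * Real.exp (-(lam * u))) * ((z - u) ^ (α - 1) * Real.exp (-(lam * (z - u))))) :=
    ((mg α lam).comp measurable_snd).mul
      ((mh α lam).comp (measurable_fst.sub measurable_snd))
  have hpos2 : ∀ z u : ℝ, 0 < u → u ≤ z → z ≤ x →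
      0 ≤ (u ^ (-α) * Real.exp (-(lam * u))) *
        ((z - u) ^ (α - 1) * Real.exp (-(lam * (z - u)))) := fun z u h1 h2 h3 =>
    mul_nonneg (mul_nonneg (Real.rpow_nonneg h1.le _) (Real.exp_pos _).le)
      (mul_nonneg (Real.rpow_nonneg (by linarith) _) (Real.exp_pos _).le)
  rw [← triangle_swap hm2 hpos2 (hfin2 hα0 hα1 hlam hx)]
  have step3 : ∫ z in Ioc (0:ℝ) x, ∫ u in Ioc (0:ℝ) z,
        ((u ^ (-α) * Real.exp (-(lam * u))) * ((z - u) ^ (α - 1) * Real.exp (-(lam * (z - u)))))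
      = ∫ z in Ioc (0:ℝ) x, Real.Gamma (1 - α) * Real.Gamma α * Real.exp (-(lam * z)) := by
    refine setIntegral_congr_fun measurableSet_Ioc fun z hz => ?_
    rw [← intervalIntegral.integral_of_le hz.1.le, beta_exp hα0 hα1 lam hz.1]
  rw [step3, integral_const_mul, ← intervalIntegral.integral_of_le hx.le,
    exp_integral hlam x]

end SoninAux

open SoninAux Set in
/-- Sonin condition for the tempered power-law kernel pair
`M x = λ^(α-1) x^(α-1) e^(-λx)/Γ(α)` and
`K x = λ (λx)^(-α) e^(-λx)/Γ(1-α) + (λ/Γ(1-α)) γ(1-α, λx)`. -/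
theorem sonin_tempered_kernels (α lam : ℝ) (hα0 : 0 < α) (hα1 : α < 1) (hlam : 0 < lam) :
    ∀ x : ℝ, 0 < x →
      ∫ z in (0 : ℝ)..x,
        (lam ^ (α - 1) * (x - z) ^ (α - 1) * Real.exp (-(lam * (x - z))) / Real.Gamma α) *
          (lam * (lam * z) ^ (-α) * Real.exp (-(lam * z)) / Real.Gamma (1 - α) +
            (lam / Real.Gamma (1 - α)) * lowerIncGamma (1 - α) (lam * z)) = 1 := by
  intro x hx
  have hΓα : (0:ℝ) < Real.Gamma α := Real.Gamma_pos_of_pos hα0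
  have hΓ1α : (0:ℝ) < Real.Gamma (1 - α) := Real.Gamma_pos_of_pos (by linarith)
  have e2 : lam ^ (α - 1) * lam * lam ^ (-α) = 1 := by
    rw [show lam ^ (α - 1) * lam * lam ^ (-α) = lam ^ (α - 1) * lam ^ (1:ℝ) * lam ^ (-α) from by
      rw [Real.rpow_one], ← Real.rpow_add hlam, ← Real.rpow_add hlam,
      show α - 1 + 1 + -α = 0 from by ring, Real.rpow_zero]
  have e3 : lam ^ (α - 1) * lam ^ (1 - α) = 1 := by
    rw [← Real.rpow_add hlam, show α - 1 + (1 - α) = 0 from by ring, Real.rpow_zero]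
  have key1 : ∀ z ∈ Ioc (0:ℝ) x,
      (lam ^ (α - 1) * (x - z) ^ (α - 1) * Real.exp (-(lam * (x - z))) / Real.Gamma α) *
        (lam * (lam * z) ^ (-α) * Real.exp (-(lam * z)) / Real.Gamma (1 - α))
      = (Real.exp (-(lam * x)) / (Real.Gamma (1 - α) * Real.Gamma α)) *
          (z ^ (-α) * (x - z) ^ (α - 1)) := by
    intro z hz
    have ee : Real.exp (-(lam * (x - z))) * Real.exp (-(lam * z)) = Real.exp (-(lam * x)) := by
      rw [← Real.exp_add]; congr 1; ring
    rw [Real.mul_rpow hlam.le hz.1.le]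
    calc (lam ^ (α - 1) * (x - z) ^ (α - 1) * Real.exp (-(lam * (x - z))) / Real.Gamma α) *
          (lam * (lam ^ (-α) * z ^ (-α)) * Real.exp (-(lam * z)) / Real.Gamma (1 - α))
        = (lam ^ (α - 1) * lam * lam ^ (-α)) *
            (Real.exp (-(lam * (x - z))) * Real.exp (-(lam * z))) *
            (z ^ (-α) * (x - z) ^ (α - 1)) / (Real.Gamma (1 - α) * Real.Gamma α) := by ring
      _ = (Real.exp (-(lam * x)) / (Real.Gamma (1 - α) * Real.Gamma α)) *
            (z ^ (-α) * (x - z) ^ (α - 1)) := by rw [e2, ee]; ring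
  have key2 : ∀ z ∈ Ioc (0:ℝ) x,
      (lam ^ (α - 1) * (x - z) ^ (α - 1) * Real.exp (-(lam * (x - z))) / Real.Gamma α) *
        ((lam / Real.Gamma (1 - α)) * lowerIncGamma (1 - α) (lam * z))
      = (lam / (Real.Gamma (1 - α) * Real.Gamma α)) *
          (((x - z) ^ (α - 1) * Real.exp (-(lam * (x - z)))) *
            ∫ u in (0:ℝ)..z, u ^ (-α) * Real.exp (-(lam * u))) := by
    intro z hz
    rw [lig_eq hα1 hlam hz.1.le]
    calc (lam ^ (α - 1) * (x - z) ^ (α - 1) * Real.exp (-(lam * (x - z))) / Real.Gamma α) *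
          ((lam / Real.Gamma (1 - α)) *
            (lam ^ (1 - α) * ∫ u in (0:ℝ)..z, u ^ (-α) * Real.exp (-(lam * u))))
        = (lam ^ (α - 1) * lam ^ (1 - α)) * lam *
            (((x - z) ^ (α - 1) * Real.exp (-(lam * (x - z)))) *
              ∫ u in (0:ℝ)..z, u ^ (-α) * Real.exp (-(lam * u)))
            / (Real.Gamma (1 - α) * Real.Gamma α) := by ring
      _ = (lam / (Real.Gamma (1 - α) * Real.Gamma α)) *
            (((x - z) ^ (α - 1) * Real.exp (-(lam * (x - z)))) *
              ∫ u in (0:ℝ)..z, u ^ (-α) * Real.exp (-(lam * u))) := by rw [e3]; ring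
  have i2' : IntegrableOn (fun z => ((x - z) ^ (α - 1) * Real.exp (-(lam * (x - z)))) *
      ∫ u in (0:ℝ)..z, u ^ (-α) * Real.exp (-(lam * u))) (Ioc 0 x) volume := by
    have hcont : Continuous fun z : ℝ => ∫ u in (0:ℝ)..z, u ^ (-α) * Real.exp (-(lam * u)) :=
      intervalIntegral.continuous_primitive (fun a b => g_int hα1 lam a b) 0
    exact ((hx_int hα0 lam x).mul_continuousOn hcont.continuousOn).1
  have i1 : IntegrableOn (fun z =>
      (lam ^ (α - 1) * (x - z) ^ (α - 1) * Real.exp (-(lam * (x - z))) / Real.Gamma α) *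
        (lam * (lam * z) ^ (-α) * Real.exp (-(lam * z)) / Real.Gamma (1 - α)))
      (Ioc 0 x) volume := by
    exact IntegrableOn.congr_fun ((A4 hα0 hα1 hx).const_mul
      (Real.exp (-(lam * x)) / (Real.Gamma (1 - α) * Real.Gamma α)))
      (fun z hz => (key1 z hz).symm) measurableSet_Ioc
  have i2 : IntegrableOn (fun z =>
      (lam ^ (α - 1) * (x - z) ^ (α - 1) * Real.exp (-(lam * (x - z))) / Real.Gamma α) *
        ((lam / Real.Gamma (1 - α)) * lowerIncGamma (1 - α) (lam * z))) (Ioc 0 x) volume := by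
    exact IntegrableOn.congr_fun (i2'.const_mul (lam / (Real.Gamma (1 - α) * Real.Gamma α)))
      (fun z hz => (key2 z hz).symm) measurableSet_Ioc
  rw [intervalIntegral.integral_of_le hx.le]
  simp only [mul_add]
  rw [integral_add i1 i2]
  have v1 : ∫ z in Ioc (0:ℝ) x,
      (lam ^ (α - 1) * (x - z) ^ (α - 1) * Real.exp (-(lam * (x - z))) / Real.Gamma α) *
        (lam * (lam * z) ^ (-α) * Real.exp (-(lam * z)) / Real.Gamma (1 - α))
      = Real.exp (-(lam * x)) := by
    rw [setIntegral_congr_fun measurableSet_Ioc key1, integral_const_mul,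
      ← intervalIntegral.integral_of_le hx.le, beta_v hα0 hα1 hx]
    field_simp
  have v2 : ∫ z in Ioc (0:ℝ) x,
      (lam ^ (α - 1) * (x - z) ^ (α - 1) * Real.exp (-(lam * (x - z))) / Real.Gamma α) *
        ((lam / Real.Gamma (1 - α)) * lowerIncGamma (1 - α) (lam * z))
      = 1 - Real.exp (-(lam * x)) := by
    rw [setIntegral_congr_fun measurableSet_Ioc key2, integral_const_mul,
      Tval hα0 hα1 hlam hx]
    field_simp
  rw [v1, v2]
  ring
end

section
/- Let g : [a, b] → ℝ be strictly increasing with continuous derivative g', let M be locally integrable on (0, ∞), and let f : [a, b] → ℝ be continuous. Then the right-sided parametric general fractional integral (I_{b-,g}^{(M)} f)(x) = ∫ₓᵇ M(g(u) - g(x)) f(u) g'(u) du equals (I_{g(b)-}^{(M)} (f ∘ g⁻¹))(g(x)), where (I_{g(b)-}^{(M)} h)(y) = ∫_{y}^{g(b)} M(ξ - y) h(ξ) dξ. -/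
open Set intervalIntegral

private lemma deriv_nonneg_aux (a b : ℝ) (hab : a < b) (g : ℝ → ℝ)
    (hg : StrictMonoOn g (Icc a b))
    (hgd : ∀ x ∈ Icc a b, HasDerivAt g (deriv g x) x) :
    ∀ u ∈ Icc a b, 0 ≤ deriv g u := by
  intro u hu
  have hmono : MonotoneOn g (Icc a b) := hg.monotoneOn
  have hslope : ∀ v ∈ Icc a b, v ≠ u → 0 ≤ slope g u v := by
    intro v hv hvu
    rcases lt_or_gt_of_ne hvu with h | h
    · have : g v ≤ g u := hmono hv hu h.le
      rw [slope_def_field]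
      exact div_nonneg_of_nonpos (by linarith) (by linarith)
    · have : g u ≤ g v := hmono hu hv h.le
      rw [slope_def_field]
      exact div_nonneg (by linarith) (by linarith)
  have htend := hasDerivAt_iff_tendsto_slope.1 (hgd u hu)
  rcases lt_or_eq_of_le hu.2 with h | h
  · -- u < b, approach from the right
    have h2 : Filter.Tendsto (slope g u) (nhdsWithin u (Ioi u)) (nhds (deriv g u)) :=
      htend.mono_left (nhdsWithin_mono _ (by intro v hv; exact ne_of_gt hv))
    refine ge_of_tendsto h2 ?_
    filter_upwards [Ioo_mem_nhdsGT_of_mem ⟨le_refl u, h⟩] with v hv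
    exact hslope v ⟨hu.1.trans hv.1.le, hv.2.le⟩ (ne_of_gt hv.1)
  · -- u = b, approach from the left
    have hau : a < u := h ▸ hab
    have h2 : Filter.Tendsto (slope g u) (nhdsWithin u (Iio u)) (nhds (deriv g u)) :=
      htend.mono_left (nhdsWithin_mono _ (by intro v hv; exact ne_of_lt hv))
    refine ge_of_tendsto h2 ?_
    filter_upwards [Ioo_mem_nhdsLT_of_mem ⟨hau, le_refl u⟩] with v hv
    exact hslope v ⟨hv.1.le, hv.2.le.trans hu.2⟩ (ne_of_lt hv.2)

/-- Conjugation identity for the right-sided parametric GFI: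
`(I_{b-,g}^{(M)} f)(x) = (I_{g(b)-}^{(M)} (f ∘ g⁻¹))(g(x))`. -/
theorem right_parametric_GFI_conjugation (M : ℝ → ℝ) (a b : ℝ) (hab : a < b)
    (hM : MeasureTheory.LocallyIntegrableOn M (Ioi 0) MeasureTheory.volume)
    (g ginv : ℝ → ℝ)
    (hg : StrictMonoOn g (Icc a b))
    (hgd : ∀ x ∈ Icc a b, HasDerivAt g (deriv g x) x)
    (hg' : ContinuousOn (deriv g) (Icc a b))
    (hginv : ∀ u ∈ Icc a b, ginv (g u) = u)
    (f : ℝ → ℝ) (hf : ContinuousOn f (Icc a b)) :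
    ∀ x ∈ Icc a b,
      (∫ u in x..b, M (g u - g x) * f u * deriv g u) =
        ∫ ξ in (g x)..(g b), M (ξ - g x) * f (ginv ξ) := by
  intro x hx
  have hxb : x ≤ b := hx.2
  have hIcc : Icc x b ⊆ Icc a b := Icc_subset_Icc hx.1 le_rfl
  have hgc : ContinuousOn g (Icc a b) := fun u hu => (hgd u hu).continuousAt.continuousWithinAt
  have hgxb : g x ≤ g b := hg.monotoneOn hx (right_mem_Icc.2 hab.le) hxb
  -- image of Icc x b under g
  have himg : g '' Icc x b = Icc (g x) (g b) := by
    apply Subset.antisymm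
    · rintro _ ⟨u, hu, rfl⟩
      exact ⟨hg.monotoneOn hx (hIcc hu) hu.1, hg.monotoneOn (hIcc hu) (right_mem_Icc.2 hab.le) hu.2⟩
    · exact intermediate_value_Icc hxb (hgc.mono hIcc)
  -- change of variables
  have hcv := MeasureTheory.integral_image_eq_integral_abs_deriv_smul
    (measurableSet_Icc : MeasurableSet (Icc x b))
    (fun u hu => (hgd u (hIcc hu)).hasDerivWithinAt)
    (hg.injOn.mono hIcc)
    (fun ξ => M (ξ - g x) * f (ginv ξ))
  rw [himg] at hcv
  have hnn : ∀ u ∈ Icc a b, 0 ≤ deriv g u := deriv_nonneg_aux a b hab g hg hgd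
  rw [intervalIntegral.integral_of_le hxb, intervalIntegral.integral_of_le hgxb,
    ← MeasureTheory.integral_Icc_eq_integral_Ioc, ← MeasureTheory.integral_Icc_eq_integral_Ioc,
    hcv]
  apply MeasureTheory.setIntegral_congr_fun measurableSet_Icc
  intro u hu
  have hu' := hIcc hu
  simp only [hginv u hu', abs_of_nonneg (hnn u hu'), smul_eq_mul]
  ring
end

section
/- Let M₁, M₂ be continuous on (0, ∞) and locally integrable at 0, let g : [a, b] → ℝ be strictly increasing with continuous nonvanishing derivative, and let f : [a, b] → ℝ be continuous. Then the parametric GFIs satisfy the semigroup property: (I_{a+,g}^{(M₁)} (I_{a+,g}^{(M₂)} f))(x) = (I_{a+,g}^{(M₁ * M₂)} f)(x) for all x in (a, b], where (M₁ * M₂)(x) = ∫₀ˣ M₁(x - z) M₂(z) dz is the Laplace convolution. -/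
open Set intervalIntegral

open MeasureTheory

/-- Left-sided parametric general fractional integral. -/
noncomputable def pGFIl (M g f : ℝ → ℝ) (a x : ℝ) : ℝ :=
  ∫ u in a..x, M (g x - g u) * f u * deriv g u

/-- Laplace convolution of kernels. -/
noncomputable def lconv (M₁ M₂ : ℝ → ℝ) (x : ℝ) : ℝ :=
  ∫ z in (0 : ℝ)..x, M₁ (x - z) * M₂ z

lemma gfi_deriv_pos {a b : ℝ} (hab : a < b) {g : ℝ → ℝ}
    (hg : StrictMonoOn g (Icc a b))
    (hgd : ∀ x ∈ Icc a b, HasDerivAt g (deriv g x) x)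
    (hg' : ContinuousOn (deriv g) (Icc a b))
    (hg0 : ∀ x ∈ Icc a b, deriv g x ≠ 0) :
    ∀ u ∈ Icc a b, 0 < deriv g u := by
  intro u hu
  rcases (hg0 u hu).lt_or_gt with h | h
  swap
  · exact h
  exfalso
  have hall : ∀ v ∈ Icc a b, deriv g v < 0 := by
    intro v hv
    rcases (hg0 v hv).lt_or_gt with h' | h'
    · exact h'
    · -- IVT: sign change gives a zero of deriv g
      exfalso
      have hsub : uIcc u v ⊆ Icc a b := by
        rw [← uIcc_of_le hab.le]
        exact uIcc_subset_uIcc (by rwa [uIcc_of_le hab.le]) (by rwa [uIcc_of_le hab.le])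
      have h0 : (0 : ℝ) ∈ uIcc (deriv g u) (deriv g v) := by
        rw [mem_uIcc]; exact Or.inl ⟨h.le, h'.le⟩
      obtain ⟨w, hw, hw0⟩ := intermediate_value_uIcc (hg'.mono hsub) h0
      exact hg0 w (hsub hw) hw0
  have hanti : StrictAntiOn g (Icc a b) := by
    refine strictAntiOn_of_deriv_neg (convex_Icc a b) ?_ ?_
    · intro z hz; exact (hgd z hz).continuousAt.continuousWithinAt
    · intro z hz
      rw [interior_Icc] at hz
      exact hall z (Ioo_subset_Icc_self hz)
  have h1 := hg (left_mem_Icc.2 hab.le) (right_mem_Icc.2 hab.le) hab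
  have h2 := hanti (left_mem_Icc.2 hab.le) (right_mem_Icc.2 hab.le) hab
  exact absurd h1 (not_lt.2 h2.le)


lemma gfi_integrable {a b : ℝ} {g : ℝ → ℝ}
    (hg : StrictMonoOn g (Icc a b))
    (hgd : ∀ x ∈ Icc a b, HasDerivAt g (deriv g x) x)
    (hgpos : ∀ u ∈ Icc a b, 0 < deriv g u)
    {M : ℝ → ℝ} (hMi : ∀ T > 0, IntervalIntegrable M volume 0 T)
    {c d : ℝ} (hc : c ∈ Icc a b) (hd : d ∈ Icc a b) (hcd : c < d) :
    IntegrableOn (fun v => M (g d - g v) * deriv g v) (Ioc c d) := by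
  have hsub : Ioc c d ⊆ Icc a b := fun v hv => ⟨hc.1.trans hv.1.le, hv.2.trans hd.2⟩
  have hder : ∀ v ∈ Ioc c d, HasDerivWithinAt g (deriv g v) (Ioc c d) v :=
    fun v hv => (hgd v (hsub hv)).hasDerivWithinAt
  have hinj : InjOn g (Ioc c d) := hg.injOn.mono hsub
  have himg : g '' Ioc c d ⊆ Ioc (g c) (g d) := by
    rintro _ ⟨v, hv, rfl⟩
    exact ⟨hg hc (hsub hv) hv.1, hg.monotoneOn (hsub hv) hd hv.2⟩
  have h0 : 0 < g d - g c := sub_pos.2 (hg hc hd hcd)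
  have hM' : IntegrableOn (fun t => M (g d - t)) (Ioc (g c) (g d)) := by
    have h1 := (hMi (g d - g c) h0).comp_sub_left (g d)
    rw [sub_zero, sub_sub_cancel] at h1
    exact (intervalIntegrable_iff_integrableOn_Ioc_of_le (by linarith)).1 h1.symm
  have h2 := (integrableOn_image_iff_integrableOn_abs_deriv_smul measurableSet_Ioc hder hinj
    (fun t => M (g d - t))).1 (hM'.mono_set himg)
  refine h2.congr_fun (fun v hv => ?_) measurableSet_Ioc
  simp only [smul_eq_mul, abs_of_pos (hgpos v (hsub hv)), mul_comm]

lemma gfi_subst {a b x : ℝ} {g : ℝ → ℝ}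
    (hg : StrictMonoOn g (Icc a b))
    (hgd : ∀ x ∈ Icc a b, HasDerivAt g (deriv g x) x)
    (hgpos : ∀ u ∈ Icc a b, 0 < deriv g u)
    {M₁ M₂ : ℝ → ℝ}
    (hM₁c : ContinuousOn M₁ (Ioi 0)) (hM₂c : ContinuousOn M₂ (Ioi 0))
    (hM₁i : ∀ T > 0, IntervalIntegrable M₁ volume 0 T)
    (hM₂i : ∀ T > 0, IntervalIntegrable M₂ volume 0 T)
    (hx : x ∈ Ioc a b) {v : ℝ} (hv : v ∈ Ico a x) :
    ∫ u in v..x, M₁ (g x - g u) * M₂ (g u - g v) * deriv g u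
      = lconv M₁ M₂ (g x - g v) := by
  have hvx : v < x := hv.2
  have hxI : x ∈ Icc a b := ⟨hx.1.le, hx.2⟩
  have hvI : v ∈ Icc a b := ⟨hv.1, hvx.le.trans hx.2⟩
  have hgc : ContinuousOn g (Icc a b) :=
    fun u hu => (hgd u hu).continuousAt.continuousWithinAt
  have hIcc : Icc v x ⊆ Icc a b := Icc_subset_Icc hvI.1 hxI.2
  have hgvgx : g v < g x := hg hvI hxI hvx
  set φ : ℝ → ℝ := fun s => M₁ (g x - s) * M₂ (s - g v) with hφ
  have himgIoo : g '' Ioo v x ⊆ Ioo (g v) (g x) := by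
    rintro _ ⟨u, hu, rfl⟩
    exact ⟨hg hvI (hIcc (Ioo_subset_Icc_self hu)) hu.1,
      hg (hIcc (Ioo_subset_Icc_self hu)) hxI hu.2⟩
  have himgIcc : g '' Icc v x ⊆ Icc (g v) (g x) := by
    rintro _ ⟨u, hu, rfl⟩
    exact ⟨hg.monotoneOn hvI (hIcc hu) hu.1, hg.monotoneOn (hIcc hu) hxI hu.2⟩
  -- integrability of φ on Icc (g v) (g x)
  have hφint : IntegrableOn φ (Icc (g v) (g x)) := by
    rw [integrableOn_Icc_iff_integrableOn_Ioo]
    set m := (g v + g x) / 2 with hm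
    have hm1 : g v < m := by rw [hm]; linarith
    have hm2 : m < g x := by rw [hm]; linarith
    have hA : IntegrableOn φ (Ioc (g v) m) := by
      have h1 : IntervalIntegrable (fun s => M₂ (s - g v)) volume (g v) m := by
        have := (hM₂i (m - g v) (by linarith)).comp_sub_right (g v)
        rwa [zero_add, sub_add_cancel] at this
      have h2 : ContinuousOn (fun s => M₁ (g x - s)) (uIcc (g v) m) := by
        rw [uIcc_of_le hm1.le]
        refine hM₁c.comp ((continuous_const.sub continuous_id).continuousOn) ?_
        intro s hs
        exact mem_Ioi.2 (by linarith [hs.2])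
      have := h1.continuousOn_mul h2
      exact (intervalIntegrable_iff_integrableOn_Ioc_of_le hm1.le).1 this
    have hB : IntegrableOn φ (Ioc m (g x)) := by
      have h1 : IntervalIntegrable (fun s => M₁ (g x - s)) volume m (g x) := by
        have := (hM₁i (g x - m) (by linarith)).comp_sub_left (g x)
        rw [sub_zero, sub_sub_cancel] at this
        exact this.symm
      have h2 : ContinuousOn (fun s => M₂ (s - g v)) (uIcc m (g x)) := by
        rw [uIcc_of_le hm2.le]
        refine hM₂c.comp ((continuous_id.sub continuous_const).continuousOn) ?_
        intro s hs
        exact mem_Ioi.2 (by simp only [id]; linarith [hs.1])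
      have := h1.mul_continuousOn h2
      exact (intervalIntegrable_iff_integrableOn_Ioc_of_le hm2.le).1 this
    refine (hA.union hB).mono_set ?_
    intro s hs
    rcases le_or_gt s m with h | h
    · exact Or.inl ⟨hs.1, h⟩
    · exact Or.inr ⟨h, hs.2.le⟩
  have hφIoo : IntegrableOn φ (Ioo (g v) (g x)) :=
    hφint.mono_set Ioo_subset_Icc_self
  -- change of variables
  have hf : ContinuousOn g (uIcc v x) := by
    rw [uIcc_of_le hvx.le]; exact hgc.mono hIcc
  have hff' : ∀ u ∈ Ioo (min v x) (max v x), HasDerivWithinAt g (deriv g u) (Ioi u) u := by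
    rw [min_eq_left hvx.le, max_eq_right hvx.le]
    exact fun u hu => ((hgd u (hIcc (Ioo_subset_Icc_self hu))).hasDerivWithinAt)
  have hg_cont : ContinuousOn φ (g '' Ioo (min v x) (max v x)) := by
    rw [min_eq_left hvx.le, max_eq_right hvx.le]
    have h1 : ContinuousOn φ (Ioo (g v) (g x)) := by
      refine ContinuousOn.mul ?_ ?_
      · refine hM₁c.comp ((continuous_const.sub continuous_id).continuousOn) ?_
        intro s hs; exact mem_Ioi.2 (by linarith [hs.2])
      · refine hM₂c.comp ((continuous_id.sub continuous_const).continuousOn) ?_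
        intro s hs; exact mem_Ioi.2 (by simp only [id]; linarith [hs.1])
    exact h1.mono himgIoo
  have hg1 : IntegrableOn φ (g '' uIcc v x) := by
    rw [uIcc_of_le hvx.le]
    exact hφint.mono_set himgIcc
  have hg2 : IntegrableOn (fun u => deriv g u • (φ ∘ g) u) (uIcc v x) := by
    rw [uIcc_of_le hvx.le, integrableOn_Icc_iff_integrableOn_Ioo]
    have hsub : Ioo v x ⊆ Icc a b := fun u hu => hIcc (Ioo_subset_Icc_self hu)
    have hder : ∀ u ∈ Ioo v x, HasDerivWithinAt g (deriv g u) (Ioo v x) u :=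
      fun u hu => (hgd u (hsub hu)).hasDerivWithinAt
    have hinj : InjOn g (Ioo v x) := hg.injOn.mono hsub
    have h2 := (integrableOn_image_iff_integrableOn_abs_deriv_smul measurableSet_Ioo hder hinj
      φ).1 (hφIoo.mono_set himgIoo)
    refine h2.congr_fun (fun u hu => ?_) measurableSet_Ioo
    simp only [Function.comp, smul_eq_mul, abs_of_pos (hgpos u (hsub hu))]
  have key := integral_comp_smul_deriv''' hf hff' hg_cont hg1 hg2
  have hfun : (fun u => deriv g u • (φ ∘ g) u)
      = fun u => M₁ (g x - g u) * M₂ (g u - g v) * deriv g u := by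
    funext u
    simp only [hφ, Function.comp, smul_eq_mul]
    ring
  rw [hfun] at key
  rw [key]
  have h2 := intervalIntegral.integral_comp_sub_right
    (a := g v) (b := g x) (fun z => M₁ ((g x - g v) - z) * M₂ z) (g v)
  simp only [sub_sub_sub_cancel_right, sub_self] at h2
  rw [hφ, lconv, ← h2]

/-- Semigroup property of left-sided parametric GFIs. -/
theorem left_parametric_GFI_semigroup (M₁ M₂ : ℝ → ℝ)
    (hM₁c : ContinuousOn M₁ (Ioi 0)) (hM₂c : ContinuousOn M₂ (Ioi 0))
    (hM₁i : ∀ T > 0, IntervalIntegrable M₁ MeasureTheory.volume 0 T)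
    (hM₂i : ∀ T > 0, IntervalIntegrable M₂ MeasureTheory.volume 0 T)
    (a b : ℝ) (hab : a < b) (g : ℝ → ℝ)
    (hg : StrictMonoOn g (Icc a b))
    (hgd : ∀ x ∈ Icc a b, HasDerivAt g (deriv g x) x)
    (hg' : ContinuousOn (deriv g) (Icc a b))
    (hg0 : ∀ x ∈ Icc a b, deriv g x ≠ 0)
    (f : ℝ → ℝ) (hf : ContinuousOn f (Icc a b)) :
    ∀ x ∈ Ioc a b,
      pGFIl M₁ g (fun u => pGFIl M₂ g f a u) a x = pGFIl (lconv M₁ M₂) g f a x := by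
  intro x hx
  obtain ⟨hax, hxb⟩ := hx
  have hxI : x ∈ Icc a b := ⟨hax.le, hxb⟩
  have haI : a ∈ Icc a b := left_mem_Icc.2 hab.le
  have hbI : b ∈ Icc a b := right_mem_Icc.2 hab.le
  have hgpos : ∀ u ∈ Icc a b, 0 < deriv g u := gfi_deriv_pos hab hg hgd hg' hg0
  have hgc : ContinuousOn g (Icc a b) :=
    fun u hu => (hgd u hu).continuousAt.continuousWithinAt
  set μ : Measure ℝ := volume.restrict (Ioc a x) with hμ
  set Φ : ℝ → ℝ → ℝ :=
    fun u v => M₁ (g x - g u) * (M₂ (g u - g v) * f v * deriv g v) * deriv g u with hΦ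
  set s : Set (ℝ × ℝ) := {p : ℝ × ℝ | a < p.2 ∧ p.2 < p.1 ∧ p.1 < x} with hs
  set F : ℝ × ℝ → ℝ := s.indicator (fun p => Φ p.1 p.2) with hF
  have hso : IsOpen s := by
    have h1 : IsOpen {p : ℝ × ℝ | a < p.2} := isOpen_lt continuous_const continuous_snd
    have h2 : IsOpen {p : ℝ × ℝ | p.2 < p.1} := isOpen_lt continuous_snd continuous_fst
    have h3 : IsOpen {p : ℝ × ℝ | p.1 < x} := isOpen_lt continuous_fst continuous_const
    have hseq : s = {p : ℝ × ℝ | a < p.2} ∩ ({p : ℝ × ℝ | p.2 < p.1} ∩ {p : ℝ × ℝ | p.1 < x}) := by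
      ext p; simp [hs, and_assoc]
    rw [hseq]
    exact h1.inter (h2.inter h3)
  -- membership facts on s
  have hmem1 : ∀ p ∈ s, p.1 ∈ Icc a b :=
    fun p hp => ⟨(hp.1.trans hp.2.1).le, hp.2.2.le.trans hxb⟩
  have hmem2 : ∀ p ∈ s, p.2 ∈ Icc a b :=
    fun p hp => ⟨hp.1.le, (hp.2.1.trans hp.2.2).le.trans hxb⟩
  -- continuity of Φ on s
  have hΦc : ContinuousOn (fun p : ℝ × ℝ => Φ p.1 p.2) s := by
    have hc1 : ContinuousOn (fun p : ℝ × ℝ => g p.1) s :=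
      hgc.comp continuous_fst.continuousOn hmem1
    have hc2 : ContinuousOn (fun p : ℝ × ℝ => g p.2) s :=
      hgc.comp continuous_snd.continuousOn hmem2
    have hcf : ContinuousOn (fun p : ℝ × ℝ => f p.2) s :=
      hf.comp continuous_snd.continuousOn hmem2
    have hd1 : ContinuousOn (fun p : ℝ × ℝ => deriv g p.1) s :=
      hg'.comp continuous_fst.continuousOn hmem1
    have hd2 : ContinuousOn (fun p : ℝ × ℝ => deriv g p.2) s :=
      hg'.comp continuous_snd.continuousOn hmem2
    have hM1 : ContinuousOn (fun p : ℝ × ℝ => M₁ (g x - g p.1)) s := by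
      refine hM₁c.comp (continuousOn_const.sub hc1) ?_
      intro p hp
      exact mem_Ioi.2 (sub_pos.2 (hg (hmem1 p hp) hxI hp.2.2))
    have hM2 : ContinuousOn (fun p : ℝ × ℝ => M₂ (g p.1 - g p.2)) s := by
      refine hM₂c.comp (hc1.sub hc2) ?_
      intro p hp
      exact mem_Ioi.2 (sub_pos.2 (hg (hmem2 p hp) (hmem1 p hp) hp.2.1))
    simp only [hΦ]
    exact (hM1.mul ((hM2.mul hcf).mul hd2)).mul hd1
  have hFm : AEStronglyMeasurable F (μ.prod μ) := by
    rw [hF, aestronglyMeasurable_indicator_iff hso.measurableSet]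
    exact hΦc.aestronglyMeasurable hso.measurableSet
  -- a.e. membership in the open interval
  have haex : ∀ᵐ u ∂μ, u ∈ Ioo a x := by
    have h1 : ∀ᵐ u ∂μ, u ∈ Ioc a x := ae_restrict_mem measurableSet_Ioc
    have h2 : ∀ᵐ u ∂μ, u ≠ x := by
      rw [ae_iff]
      have : {u : ℝ | ¬u ≠ x} = {x} := by ext u; simp
      rw [this, hμ, Measure.restrict_apply' measurableSet_Ioc]
      exact measure_mono_null inter_subset_left (measure_singleton x)
    filter_upwards [h1, h2] with u h1 h2
    exact ⟨h1.1, lt_of_le_of_ne h1.2 h2⟩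
  -- restricted measure identity
  have hres : ∀ c d : ℝ, a ≤ c → d ≤ x → μ.restrict (Ioo c d) = volume.restrict (Ioo c d) := by
    intro c d hc hd
    rw [hμ, Measure.restrict_restrict measurableSet_Ioo,
      inter_eq_self_of_subset_left (show Ioo c d ⊆ Ioc a x from fun v hv => ⟨hc.trans_lt hv.1, hv.2.le.trans hd⟩)]
  -- section identity in u
  have hsec : ∀ u ∈ Ioo a x, (fun v => F (u, v)) = (Ioo a u).indicator (fun v => Φ u v) := by
    intro u hu
    funext v
    rw [hF]
    simp only [indicator_apply, mem_setOf_eq, mem_Ioo, hs]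
    by_cases h : a < v ∧ v < u
    · rw [if_pos ⟨h.1, h.2, hu.2⟩, if_pos h]
    · rw [if_neg (fun hh => h ⟨hh.1, hh.2.1⟩), if_neg h]
  -- integrability of Φ u on (a,u), w.r.t. volume
  have hsecvol : ∀ u ∈ Ioo a x, IntegrableOn (fun v => Φ u v) (Ioo a u) volume := by
    intro u hu
    have huI : u ∈ Icc a b := ⟨hu.1.le, hu.2.le.trans hxb⟩
    have h1 : IntegrableOn (fun v => M₂ (g u - g v) * deriv g v) (Ioc a u) volume :=
      gfi_integrable hg hgd hgpos hM₂i haI huI hu.1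
    have h2 : IntervalIntegrable (fun v => M₂ (g u - g v) * deriv g v) volume a u :=
      (intervalIntegrable_iff_integrableOn_Ioc_of_le hu.1.le).2 h1
    have h3 := h2.mul_continuousOn (g := f)
      (by rw [uIcc_of_le hu.1.le]; exact hf.mono (Icc_subset_Icc le_rfl huI.2))
    have h4 := h3.const_mul (M₁ (g x - g u) * deriv g u)
    have h5 : IntervalIntegrable (fun v => Φ u v) volume a u := by
      have heq : (fun v => M₁ (g x - g u) * deriv g u * (M₂ (g u - g v) * deriv g v * f v))
          = fun v => Φ u v := by
        funext v; simp only [hΦ]; ring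
      rwa [heq] at h4
    exact ((intervalIntegrable_iff_integrableOn_Ioc_of_le hu.1.le).1 h5).mono_set Ioo_subset_Ioc_self
  -- sections are integrable
  have hsecint : ∀ᵐ u ∂μ, Integrable (fun v => F (u, v)) μ := by
    filter_upwards [haex] with u hu
    rw [hsec u hu]
    have h7 : IntegrableOn (fun v => Φ u v) (Ioo a u) μ := by
      rw [IntegrableOn, hres a u le_rfl hu.2.le]
      exact hsecvol u hu
    exact h7.integrable_indicator measurableSet_Ioo
  -- bound for the iterated norm integral
  obtain ⟨Cf, hCf⟩ := (isCompact_Icc (a := a) (b := b)).exists_bound_of_continuousOn hf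
  have hCf0 : 0 ≤ Cf := le_trans (norm_nonneg _) (hCf a haI)
  have hgab : g a < g b := hg haI hbI hab
  set B : ℝ := ∫ z in (0:ℝ)..(g b - g a), ‖M₂ z‖ with hB
  have hBint : IntervalIntegrable (fun z => ‖M₂ z‖) volume 0 (g b - g a) :=
    (hM₂i _ (sub_pos.2 hgab)).norm
  have hB0 : 0 ≤ B := by
    rw [hB]
    apply intervalIntegral.integral_nonneg (by linarith)
    intro z _; exact norm_nonneg _
  have hbnd : ∀ u ∈ Ioo a x,
      (∫ v, ‖F (u, v)‖ ∂μ) ≤ ‖M₁ (g x - g u) * deriv g u‖ * (Cf * B) := by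
    intro u hu
    have huI : u ∈ Icc a b := ⟨hu.1.le, hu.2.le.trans hxb⟩
    have hgau : g a < g u := hg haI huI hu.1
    have hIooI : Ioo a u ⊆ Icc a b := fun v hv => ⟨hv.1.le, hv.2.le.trans huI.2⟩
    have hnormid : (fun v => ‖F (u, v)‖) = (Ioo a u).indicator (fun v => ‖Φ u v‖) := by
      funext v
      rw [show F (u, v) = (Ioo a u).indicator (fun v => Φ u v) v from congrFun (hsec u hu) v]
      exact norm_indicator_eq_indicator_norm _ _
    rw [hnormid, MeasureTheory.integral_indicator measurableSet_Ioo, hres a u le_rfl hu.2.le]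
    -- the β integrand
    have hβint : IntegrableOn (fun v => ‖M₂ (g u - g v)‖ * deriv g v) (Ioo a u) volume :=
      (gfi_integrable hg hgd hgpos (M := fun z => ‖M₂ z‖)
        (fun T hT => (hM₂i T hT).norm) haI huI hu.1).mono_set Ioo_subset_Ioc_self
    have hφn : IntegrableOn (fun v => ‖Φ u v‖) (Ioo a u) volume := (hsecvol u hu).norm
    have hle : ∀ v ∈ Ioo a u,
        ‖Φ u v‖ ≤ ‖M₁ (g x - g u) * deriv g u‖ * (Cf * (‖M₂ (g u - g v)‖ * deriv g v)) := by
      intro v hv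
      have hvI : v ∈ Icc a b := hIooI hv
      have h1 : Φ u v = (M₁ (g x - g u) * deriv g u) * (f v * (M₂ (g u - g v) * deriv g v)) := by
        simp only [hΦ]; ring
      rw [h1]
      simp only [norm_mul]
      rw [Real.norm_eq_abs (deriv g v), abs_of_pos (hgpos v hvI)]
      refine mul_le_mul_of_nonneg_left ?_ (by positivity)
      exact mul_le_mul_of_nonneg_right (hCf v hvI)
        (mul_nonneg (norm_nonneg _) (hgpos v hvI).le)
    have hmono := setIntegral_mono_on hφn
      (((hβint.const_mul Cf).const_mul (‖M₁ (g x - g u) * deriv g u‖))) measurableSet_Ioo hle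
    refine hmono.trans ?_
    rw [MeasureTheory.integral_const_mul, MeasureTheory.integral_const_mul]
    have hβB : (∫ v in Ioo a u, ‖M₂ (g u - g v)‖ * deriv g v) ≤ B := by
      have hder : ∀ v ∈ Ioo a u, HasDerivWithinAt g (deriv g v) (Ioo a u) v :=
        fun v hv => (hgd v (hIooI hv)).hasDerivWithinAt
      have hinj : InjOn g (Ioo a u) := hg.injOn.mono hIooI
      have heq := integral_image_eq_integral_abs_deriv_smul measurableSet_Ioo hder hinj
        (fun t => ‖M₂ (g u - t)‖)
      have heq2 : (∫ v in Ioo a u, ‖M₂ (g u - g v)‖ * deriv g v)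
          = ∫ t in g '' Ioo a u, ‖M₂ (g u - t)‖ := by
        rw [heq]
        refine setIntegral_congr_fun measurableSet_Ioo (fun v hv => ?_)
        simp only [smul_eq_mul, abs_of_pos (hgpos v (hIooI hv))]
        ring
      rw [heq2]
      have hMint : IntegrableOn (fun t => ‖M₂ (g u - t)‖) (Ioc (g a) (g u)) := by
        have h1 := ((hM₂i (g u - g a) (sub_pos.2 hgau)).norm).comp_sub_left (g u)
        rw [sub_zero, sub_sub_cancel] at h1
        exact (intervalIntegrable_iff_integrableOn_Ioc_of_le hgau.le).1 h1.symm
      have himg : g '' Ioo a u ⊆ Ioc (g a) (g u) := by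
        rintro _ ⟨v, hv, rfl⟩
        exact ⟨hg haI (hIooI hv) hv.1, (hg.monotoneOn (hIooI hv) huI hv.2.le)⟩
      have hstep := setIntegral_mono_set hMint
        (Filter.Eventually.of_forall (fun t => norm_nonneg _)) himg.eventuallyLE
      refine hstep.trans ?_
      rw [← intervalIntegral.integral_of_le hgau.le]
      have h3 := intervalIntegral.integral_comp_sub_left (a := g a) (b := g u)
        (fun z => ‖M₂ z‖) (g u)
      rw [sub_self] at h3
      rw [h3]
      refine intervalIntegral.integral_mono_interval le_rfl (by linarith) ?_
        (Filter.Eventually.of_forall (fun t => norm_nonneg _)) hBint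
      have := hg.monotoneOn huI hbI huI.2
      linarith
    exact mul_le_mul_of_nonneg_left (mul_le_mul_of_nonneg_left hβB hCf0) (norm_nonneg _)
  -- integrability of the iterated norm integral
  have hnormint : Integrable (fun u => ∫ v, ‖F (u, v)‖ ∂μ) μ := by
    have hD : Integrable (fun u => ‖M₁ (g x - g u) * deriv g u‖ * (Cf * B)) μ := by
      have h1 : IntegrableOn (fun u => M₁ (g x - g u) * deriv g u) (Ioc a x) volume :=
        gfi_integrable hg hgd hgpos hM₁i haI hxI hax
      exact h1.norm.mul_const (Cf * B)
    refine hD.mono' hFm.norm.integral_prod_right' ?_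
    filter_upwards [haex] with u hu
    rw [Real.norm_eq_abs, abs_of_nonneg (integral_nonneg (fun v => norm_nonneg _))]
    exact hbnd u hu
  have hFint : Integrable F (μ.prod μ) :=
    (integrable_prod_iff hFm).2 ⟨hsecint, hnormint⟩
  have huncurry : Function.uncurry (fun u v => F (u, v)) = F := by
    funext p; simp [Function.uncurry]
  have hswap : (∫ u, ∫ v, F (u, v) ∂μ ∂μ) = ∫ v, ∫ u, F (u, v) ∂μ ∂μ := by
    apply integral_integral_swap
    rwa [huncurry]
  -- identify LHS
  have hLHS : pGFIl M₁ g (fun u => pGFIl M₂ g f a u) a x = ∫ u, ∫ v, F (u, v) ∂μ ∂μ := by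
    rw [pGFIl, intervalIntegral.integral_of_le hax.le, ← hμ]
    refine integral_congr_ae ?_
    filter_upwards [haex] with u hu
    rw [hsec u hu, MeasureTheory.integral_indicator measurableSet_Ioo, hres a u le_rfl hu.2.le,
      ← integral_Ioc_eq_integral_Ioo, ← intervalIntegral.integral_of_le hu.1.le]
    have hΦu : ∀ v, Φ u v
        = (M₁ (g x - g u) * deriv g u) * (M₂ (g u - g v) * f v * deriv g v) := by
      intro v; simp only [hΦ]; ring
    simp only [hΦu]
    rw [intervalIntegral.integral_const_mul]
    rw [pGFIl]
    ring
  -- identify RHS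
  have hRHS : (∫ v, ∫ u, F (u, v) ∂μ ∂μ) = pGFIl (lconv M₁ M₂) g f a x := by
    rw [pGFIl, intervalIntegral.integral_of_le hax.le, ← hμ]
    refine integral_congr_ae ?_
    filter_upwards [haex] with v hv
    have hsec2 : (fun u => F (u, v)) = (Ioo v x).indicator (fun u => Φ u v) := by
      funext u
      rw [hF]
      simp only [indicator_apply, mem_setOf_eq, mem_Ioo, hs]
      by_cases h : v < u ∧ u < x
      · rw [if_pos ⟨hv.1, h.1, h.2⟩, if_pos h]
      · rw [if_neg (fun hh => h ⟨hh.2.1, hh.2.2⟩), if_neg h]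
    rw [hsec2, MeasureTheory.integral_indicator measurableSet_Ioo, hres v x hv.1.le le_rfl,
      ← integral_Ioc_eq_integral_Ioo, ← intervalIntegral.integral_of_le hv.2.le]
    have hΦv : ∀ u, Φ u v
        = (f v * deriv g v) * (M₁ (g x - g u) * M₂ (g u - g v) * deriv g u) := by
      intro u; simp only [hΦ]; ring
    simp only [hΦv]
    rw [intervalIntegral.integral_const_mul]
    rw [gfi_subst hg hgd hgpos hM₁c hM₂c hM₁i hM₂i ⟨hax, hxb⟩ ⟨hv.1.le, hv.2⟩]
    ring
  rw [hLHS, hswap, hRHS]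
end

section
/- Under the same hypotheses, the right-sided parametric GFIs satisfy (I_{b-,g}^{(M₁)} (I_{b-,g}^{(M₂)} f))(x) = (I_{b-,g}^{(M₁ * M₂)} f)(x) for all x in [a, b), where (M₁ * M₂) is the Laplace convolution of the kernels. -/
open Set intervalIntegral

/-- Right-sided parametric general fractional integral. -/
noncomputable def pGFIr (M g f : ℝ → ℝ) (b x : ℝ) : ℝ :=
  ∫ u in x..b, M (g u - g x) * f u * deriv g u

open MeasureTheory Filter Topology in
/-- positivity of the derivative of a strictly monotone function -/
private theorem deriv_pos_of_strictMonoOn {a b : ℝ} (hab : a < b) {g : ℝ → ℝ}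
    (hg : StrictMonoOn g (Icc a b))
    (hgd : ∀ x ∈ Icc a b, HasDerivAt g (deriv g x) x)
    (hg0 : ∀ x ∈ Icc a b, deriv g x ≠ 0) :
    ∀ u ∈ Icc a b, 0 < deriv g u := by
  intro u hu
  rcases (hg0 u hu).lt_or_gt with h | h
  · exfalso
    have hslope := hasDerivAt_iff_tendsto_slope.mp (hgd u hu)
    rcases lt_or_ge u b with hub | hbu
    · have h1 : Tendsto (slope g u) (𝓝[>] u) (𝓝 (deriv g u)) :=
        hslope.mono_left (nhdsWithin_mono _ fun y hy => ne_of_gt hy)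
      have h2 : ∀ᶠ y in 𝓝[>] u, 0 ≤ slope g u y := by
        filter_upwards [Ioc_mem_nhdsGT_of_mem ⟨le_refl u, hub⟩] with y hy
        have hyI : y ∈ Icc a b := ⟨hu.1.trans hy.1.le, hy.2⟩
        have hgy : g u < g y := hg hu hyI hy.1
        rw [slope_def_field]
        exact (div_pos (by linarith) (by linarith [hy.1])).le
      have := ge_of_tendsto h1 h2
      linarith
    · have hau : a < u := lt_of_lt_of_le hab hbu
      have h1 : Tendsto (slope g u) (𝓝[<] u) (𝓝 (deriv g u)) :=
        hslope.mono_left (nhdsWithin_mono _ fun y hy => ne_of_lt hy)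
      have h2 : ∀ᶠ y in 𝓝[<] u, 0 ≤ slope g u y := by
        filter_upwards [Ico_mem_nhdsLT_of_mem ⟨hau, le_refl u⟩] with y hy
        have hyI : y ∈ Icc a b := ⟨hy.1, hy.2.le.trans hu.2⟩
        have hgy : g y < g u := hg hyI hu hy.2
        rw [slope_def_field, show (g y - g u) / (y - u) = (g u - g y) / (u - y) by
          rw [← neg_div_neg_eq]; ring_nf]
        exact (div_pos (by linarith) (by linarith [hy.2])).le
      have := ge_of_tendsto h1 h2
      linarith
  · exact h

open MeasureTheory in
/-- Semigroup property of right-sided parametric GFIs. -/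
theorem right_parametric_GFI_semigroup (M₁ M₂ : ℝ → ℝ)
    (hM₁c : ContinuousOn M₁ (Ioi 0)) (hM₂c : ContinuousOn M₂ (Ioi 0))
    (hM₁i : ∀ T > 0, IntervalIntegrable M₁ MeasureTheory.volume 0 T)
    (hM₂i : ∀ T > 0, IntervalIntegrable M₂ MeasureTheory.volume 0 T)
    (a b : ℝ) (hab : a < b) (g : ℝ → ℝ)
    (hg : StrictMonoOn g (Icc a b))
    (hgd : ∀ x ∈ Icc a b, HasDerivAt g (deriv g x) x)
    (hg' : ContinuousOn (deriv g) (Icc a b))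
    (hg0 : ∀ x ∈ Icc a b, deriv g x ≠ 0)
    (f : ℝ → ℝ) (hf : ContinuousOn f (Icc a b)) :
    ∀ x ∈ Ico a b,
      pGFIr M₁ g (fun u => pGFIr M₂ g f b u) b x = pGFIr (lconv M₁ M₂) g f b x := by
  intro x hx
  obtain ⟨hax, hxb⟩ := hx
  have hxI : x ∈ Icc a b := ⟨hax, hxb.le⟩
  have hbI : b ∈ Icc a b := ⟨hab.le, le_refl b⟩
  have hgc : ContinuousOn g (Icc a b) := fun u hu => (hgd u hu).continuousAt.continuousWithinAt
  have hgpos : ∀ u ∈ Icc a b, 0 < deriv g u := deriv_pos_of_strictMonoOn hab hg hgd hg0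
  obtain ⟨C, hC⟩ := (isCompact_Icc (a := a) (b := b)).exists_bound_of_continuousOn hf
  have hC0 : 0 ≤ C := (norm_nonneg _).trans (hC a ⟨le_refl a, hab.le⟩)
  have hIccmem : ∀ p ∈ Icc a b, ∀ q ∈ Icc a b, ∀ u ∈ Ioo p q, u ∈ Icc a b :=
    fun p hp q hq u hu => ⟨hp.1.trans hu.1.le, hu.2.le.trans hq.2⟩
  -- image of Ioo under u ↦ g u - g p
  have himg : ∀ p ∈ Icc a b, ∀ q ∈ Icc a b, p ≤ q →
      (fun u => g u - g p) '' Ioo p q = Ioo 0 (g q - g p) := by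
    intro p hp q hq hpq
    have hcomp : (fun u => g u - g p) = (fun y => y - g p) ∘ g := rfl
    rw [hcomp, image_comp]
    have hgimg : g '' Ioo p q = Ioo (g p) (g q) := by
      apply Subset.antisymm
      · rintro _ ⟨u, hu, rfl⟩
        have huI : u ∈ Icc a b := hIccmem p hp q hq u hu
        exact ⟨hg hp huI hu.1, hg huI hq hu.2⟩
      · exact intermediate_value_Ioo hpq (hgc.mono (Icc_subset_Icc hp.1 hq.2))
    rw [hgimg, image_sub_const_Ioo, sub_self]
  have hderivIoo : ∀ p ∈ Icc a b, ∀ q ∈ Icc a b, ∀ u ∈ Ioo p q,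
      HasDerivWithinAt (fun y => g y - g p) (deriv g u) (Ioo p q) u := by
    intro p hp q hq u hu
    exact ((hgd u (hIccmem p hp q hq u hu)).sub_const (g p)).hasDerivWithinAt
  have hinj : ∀ p ∈ Icc a b, ∀ q ∈ Icc a b, InjOn (fun y => g y - g p) (Ioo p q) := by
    intro p hp q hq u hu v hv huv
    exact hg.injOn (hIccmem p hp q hq u hu) (hIccmem p hp q hq v hv) (by dsimp at huv; linarith)
  -- substitution: equality of integrals
  have hsub_eq : ∀ p ∈ Icc a b, ∀ q ∈ Icc a b, p ≤ q → ∀ G : ℝ → ℝ,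
      ∫ z in Ioo 0 (g q - g p), G z = ∫ u in Ioo p q, G (g u - g p) * deriv g u := by
    intro p hp q hq hpq G
    have h0 := integral_image_eq_integral_abs_deriv_smul measurableSet_Ioo
      (hderivIoo p hp q hq) (hinj p hp q hq) G
    rw [himg p hp q hq hpq] at h0
    rw [h0]
    apply setIntegral_congr_fun measurableSet_Ioo
    intro u hu
    have huI : u ∈ Icc a b := hIccmem p hp q hq u hu
    simp only [smul_eq_mul, abs_of_pos (hgpos u huI)]
    ring
  -- substitution: integrability transfer
  have hsub_int : ∀ p ∈ Icc a b, ∀ q ∈ Icc a b, p ≤ q → ∀ G : ℝ → ℝ,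
      IntegrableOn G (Ioo 0 (g q - g p)) →
      IntegrableOn (fun u => G (g u - g p) * deriv g u) (Ioo p q) := by
    intro p hp q hq hpq G hG
    have h0 := (integrableOn_image_iff_integrableOn_abs_deriv_smul measurableSet_Ioo
      (hderivIoo p hp q hq) (hinj p hp q hq) G)
    rw [himg p hp q hq hpq] at h0
    have h1 := h0.mp hG
    apply (integrableOn_congr_fun _ measurableSet_Ioo).mp h1
    intro u hu
    have huI : u ∈ Icc a b := hIccmem p hp q hq u hu
    simp only [smul_eq_mul, abs_of_pos (hgpos u huI)]
    ring
  set w0 : ℝ := g b - g x with hw0def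
  have hw0 : 0 < w0 := sub_pos.mpr (hg hxI hbI hxb)
  have hM2A : IntegrableOn M₂ (Ioo 0 w0) :=
    ((intervalIntegrable_iff_integrableOn_Ioc_of_le hw0.le).mp (hM₂i w0 hw0)).mono_set
      Ioo_subset_Ioc_self
  have hM1A : IntegrableOn M₁ (Ioo 0 w0) :=
    ((intervalIntegrable_iff_integrableOn_Ioc_of_le hw0.le).mp (hM₁i w0 hw0)).mono_set
      Ioo_subset_Ioc_self
  have hM2Aabs : IntegrableOn (fun z => |M₂ z|) (Ioo 0 w0) := hM2A.abs
  have hM1base : IntegrableOn (fun u => M₁ (g u - g x) * deriv g u) (Ioo x b) :=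
    hsub_int x hxI b hbI hxb.le M₁ hM1A
  -- the inner kernel and its properties
  have hsubIcc : ∀ u ∈ Ioc x b, Ioo u b ⊆ Icc a b := by
    intro u hu v hv
    exact ⟨(hax.trans hu.1.le).trans hv.1.le, hv.2.le⟩
  have huIcc : ∀ u ∈ Ioc x b, u ∈ Icc a b := fun u hu => ⟨hax.trans hu.1.le, hu.2⟩
  have hM2sub : ∀ u ∈ Ioc x b, Ioo 0 (g b - g u) ⊆ Ioo 0 w0 := by
    intro u hu
    exact Ioo_subset_Ioo_right (sub_le_sub_left (hg hxI (huIcc u hu) hu.1).le (g b))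
  have hbase2 : ∀ u ∈ Ioc x b,
      IntegrableOn (fun v => M₂ (g v - g u) * deriv g v) (Ioo u b) := fun u hu =>
    hsub_int u (huIcc u hu) b hbI hu.2 M₂ (hM2A.mono_set (hM2sub u hu))
  have hbase2abs : ∀ u ∈ Ioc x b,
      IntegrableOn (fun v => |M₂ (g v - g u)| * deriv g v) (Ioo u b) := fun u hu =>
    hsub_int u (huIcc u hu) b hbI hu.2 (fun z => |M₂ z|) (hM2Aabs.mono_set (hM2sub u hu))
  have hcontGu : ∀ u ∈ Ioc x b,
      ContinuousOn (fun v => M₂ (g v - g u) * f v * deriv g v) (Ioo u b) := by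
    intro u hu
    refine (ContinuousOn.mul (ContinuousOn.mul ?_ (hf.mono (hsubIcc u hu)))
      (hg'.mono (hsubIcc u hu)))
    refine hM₂c.comp ((hgc.mono (hsubIcc u hu)).sub continuousOn_const) ?_
    intro v hv
    exact mem_Ioi.mpr (sub_pos.mpr (hg (huIcc u hu) (hsubIcc u hu hv) hv.1))
  have hGuInt : ∀ u ∈ Ioc x b,
      IntegrableOn (fun v => M₂ (g v - g u) * f v * deriv g v) (Ioo u b) := by
    intro u hu
    apply Integrable.mono' ((hbase2abs u hu).const_mul C)
      ((hcontGu u hu).aestronglyMeasurable measurableSet_Ioo)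
    filter_upwards [ae_restrict_mem measurableSet_Ioo] with v hv
    have hvI : v ∈ Icc a b := hsubIcc u hu hv
    have hd : 0 < deriv g v := hgpos v hvI
    rw [Real.norm_eq_abs, abs_mul, abs_mul, abs_of_pos hd]
    have h1 : |f v| ≤ C := (Real.norm_eq_abs (f v)) ▸ hC v hvI
    calc |M₂ (g v - g u)| * |f v| * deriv g v
        ≤ |M₂ (g v - g u)| * C * deriv g v := by
          apply mul_le_mul_of_nonneg_right (mul_le_mul_of_nonneg_left h1 (abs_nonneg _)) hd.le
      _ = C * (|M₂ (g v - g u)| * deriv g v) := by ring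
  set μ : Measure ℝ := volume.restrict (Ioc x b) with hμdef
  set H : ℝ → ℝ → ℝ := fun u v =>
    M₁ (g u - g x) *
      ((Ioi u).indicator (fun v => M₂ (g v - g u) * f v * deriv g v) v * deriv g u) with hHdef
  -- measurability of H on the product
  have hT : MeasurableSet {p : ℝ × ℝ | p.1 < p.2} :=
    measurableSet_lt measurable_fst measurable_snd
  have hHmeas : AEStronglyMeasurable (fun p : ℝ × ℝ => H p.1 p.2) (μ.prod μ) := by
    have hHeq : (fun p : ℝ × ℝ => H p.1 p.2) =
        ({p : ℝ × ℝ | p.1 < p.2}).indicator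
          (fun p => M₁ (g p.1 - g x) *
            ((M₂ (g p.2 - g p.1) * f p.2 * deriv g p.2) * deriv g p.1)) := by
      funext p
      by_cases h : p.1 < p.2 <;>
        simp [H, indicator_apply, mem_Ioi, h, mem_setOf_eq]
    rw [hHeq, hμdef, Measure.prod_restrict, aestronglyMeasurable_indicator_iff hT,
      Measure.restrict_restrict hT]
    set S : Set (ℝ × ℝ) := {p : ℝ × ℝ | p.1 < p.2} ∩ Ioc x b ×ˢ Ioc x b with hSdef
    have hmem1 : ∀ p ∈ S, p.1 ∈ Icc a b := fun p hp => huIcc p.1 hp.2.1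
    have hmem2 : ∀ p ∈ S, p.2 ∈ Icc a b := fun p hp => huIcc p.2 hp.2.2
    apply ContinuousOn.aestronglyMeasurable _ (hT.inter (measurableSet_Ioc.prod measurableSet_Ioc))
    have h1 : ContinuousOn (fun p : ℝ × ℝ => g p.1) S :=
      hgc.comp continuous_fst.continuousOn hmem1
    have h2 : ContinuousOn (fun p : ℝ × ℝ => g p.2) S :=
      hgc.comp continuous_snd.continuousOn hmem2
    have hd1 : ContinuousOn (fun p : ℝ × ℝ => deriv g p.1) S :=
      hg'.comp continuous_fst.continuousOn hmem1
    have hd2 : ContinuousOn (fun p : ℝ × ℝ => deriv g p.2) S :=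
      hg'.comp continuous_snd.continuousOn hmem2
    have hf2 : ContinuousOn (fun p : ℝ × ℝ => f p.2) S :=
      hf.comp continuous_snd.continuousOn hmem2
    have hm1 : ContinuousOn (fun p : ℝ × ℝ => M₁ (g p.1 - g x)) S := by
      refine hM₁c.comp (h1.sub continuousOn_const) ?_
      intro p hp
      exact mem_Ioi.mpr (sub_pos.mpr (hg hxI (hmem1 p hp) hp.2.1.1))
    have hm2 : ContinuousOn (fun p : ℝ × ℝ => M₂ (g p.2 - g p.1)) S := by
      refine hM₂c.comp (h2.sub h1) ?_
      intro p hp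
      exact mem_Ioi.mpr (sub_pos.mpr (hg (hmem1 p hp) (hmem2 p hp) hp.1))
    exact hm1.mul (((hm2.mul hf2).mul hd2).mul hd1)
  -- sections are integrable
  have hIocinter : ∀ u ∈ Ioc x b, Ioc x b ∩ Ioi u = Ioc u b := by
    intro u hu
    rw [Set.Ioc_inter_Ioi, sup_eq_right.mpr hu.1.le]
  have hsec : ∀ᵐ u ∂μ, Integrable (H u) μ := by
    rw [hμdef]
    filter_upwards [ae_restrict_mem measurableSet_Ioc] with u hu
    have hIeq : H u =
        fun v => (M₁ (g u - g x) * deriv g u) *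
          (Ioi u).indicator (fun v => M₂ (g v - g u) * f v * deriv g v) v := by
      funext v; simp [H]; ring
    rw [hIeq]
    apply Integrable.const_mul
    rw [integrable_indicator_iff measurableSet_Ioi]
    have : IntegrableOn (fun v => M₂ (g v - g u) * f v * deriv g v) (Ioc u b) :=
      (integrableOn_Ioc_iff_integrableOn_Ioo).mpr (hGuInt u hu)
    rw [IntegrableOn, Measure.restrict_restrict measurableSet_Ioi]
    rw [show Ioi u ∩ Ioc x b = Ioc u b by rw [Set.inter_comm]; exact hIocinter u hu]
    exact this
  -- the norm-integral bound for Fubini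
  set A : ℝ := ∫ z in Ioo 0 w0, |M₂ z| with hAdef
  have hA0 : 0 ≤ A := setIntegral_nonneg measurableSet_Ioo fun z _ => abs_nonneg _
  have hM1baseIoc : IntegrableOn (fun u => M₁ (g u - g x) * deriv g u) (Ioc x b) :=
    (integrableOn_Ioc_iff_integrableOn_Ioo).mpr hM1base
  have hM1baseIocAbs : IntegrableOn (fun u => |M₁ (g u - g x) * deriv g u|) (Ioc x b) :=
    hM1baseIoc.abs
  have hnorm : Integrable (fun u => ∫ v, ‖H u v‖ ∂μ) μ := by
    apply Integrable.mono' (hM1baseIocAbs.mul_const (C * A))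
      hHmeas.norm.integral_prod_right'
    rw [hμdef]
    filter_upwards [ae_restrict_mem measurableSet_Ioc] with u hu
    have huI := huIcc u hu
    have h1 : (fun v => ‖H u v‖) =
        fun v => (|M₁ (g u - g x)| * deriv g u) *
          (Ioi u).indicator (fun v => |M₂ (g v - g u) * f v * deriv g v|) v := by
      funext v
      by_cases h : u < v <;>
        simp [H, indicator_apply, mem_Ioi, h, Real.norm_eq_abs, abs_mul,
          abs_of_pos (hgpos u huI)] <;> ring
    rw [Real.norm_eq_abs, abs_of_nonneg (integral_nonneg fun v => norm_nonneg _), h1,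
      MeasureTheory.integral_const_mul]
    have hc0 : 0 ≤ |M₁ (g u - g x)| * deriv g u := mul_nonneg (abs_nonneg _) (hgpos u huI).le
    have hind : (∫ v, (Ioi u).indicator (fun v => |M₂ (g v - g u) * f v * deriv g v|) v ∂μ)
        ≤ C * A := by
      rw [hμdef, MeasureTheory.integral_indicator measurableSet_Ioi,
        Measure.restrict_restrict measurableSet_Ioi,
        show Ioi u ∩ Ioc x b = Ioc u b from by rw [inter_comm]; exact hIocinter u hu]
      rw [show ∫ v in Ioc u b, |M₂ (g v - g u) * f v * deriv g v|
          = ∫ v in Ioo u b, |M₂ (g v - g u) * f v * deriv g v| from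
        MeasureTheory.integral_Ioc_eq_integral_Ioo]
      calc (∫ v in Ioo u b, |M₂ (g v - g u) * f v * deriv g v|)
          ≤ ∫ v in Ioo u b, C * ((fun z => |M₂ z|) (g v - g u) * deriv g v) := by
            apply setIntegral_mono_on ((hGuInt u hu).abs) ((hbase2abs u hu).const_mul C)
              measurableSet_Ioo
            intro v hv
            have hvI := hsubIcc u hu hv
            rw [abs_mul, abs_mul, abs_of_pos (hgpos v hvI)]
            have h2 : |f v| ≤ C := (Real.norm_eq_abs (f v)) ▸ hC v hvI
            calc |M₂ (g v - g u)| * |f v| * deriv g v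
                ≤ |M₂ (g v - g u)| * C * deriv g v :=
                  mul_le_mul_of_nonneg_right
                    (mul_le_mul_of_nonneg_left h2 (abs_nonneg _)) (hgpos v hvI).le
              _ = C * (|M₂ (g v - g u)| * deriv g v) := by ring
        _ = C * ∫ z in Ioo 0 (g b - g u), |M₂ z| := by
            rw [MeasureTheory.integral_const_mul,
              ← hsub_eq u huI b hbI hu.2 (fun z => |M₂ z|)]
        _ ≤ C * A := by
            apply mul_le_mul_of_nonneg_left _ hC0
            exact setIntegral_mono_set hM2Aabs
              (by filter_upwards with z using abs_nonneg _)
              ((hM2sub u hu).eventuallyLE)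
    calc |M₁ (g u - g x)| * deriv g u *
          ∫ v, (Ioi u).indicator (fun v => |M₂ (g v - g u) * f v * deriv g v|) v ∂μ
        ≤ |M₁ (g u - g x)| * deriv g u * (C * A) := mul_le_mul_of_nonneg_left hind hc0
      _ = |M₁ (g u - g x) * deriv g u| * (C * A) := by
          rw [abs_mul, abs_of_pos (hgpos u huI)]
  have hHint : Integrable (fun p : ℝ × ℝ => H p.1 p.2) (μ.prod μ) :=
    (MeasureTheory.integrable_prod_iff hHmeas).mpr ⟨hsec, hnorm⟩
  -- the main computation
  have hLHS : pGFIr M₁ g (fun u => pGFIr M₂ g f b u) b x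
      = ∫ u, M₁ (g u - g x) * pGFIr M₂ g f b u * deriv g u ∂μ := by
    rw [hμdef]
    exact intervalIntegral.integral_of_le hxb.le
  have hRHS : pGFIr (lconv M₁ M₂) g f b x
      = ∫ v, lconv M₁ M₂ (g v - g x) * f v * deriv g v ∂μ := by
    rw [hμdef]
    exact intervalIntegral.integral_of_le hxb.le
  rw [hLHS, hRHS]
  calc (∫ u, M₁ (g u - g x) * pGFIr M₂ g f b u * deriv g u ∂μ)
      = ∫ u, (∫ v, H u v ∂μ) ∂μ := by
        rw [hμdef]
        apply setIntegral_congr_fun measurableSet_Ioc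
        intro u hu
        dsimp only
        have hKu : pGFIr M₂ g f b u
            = ∫ v, (Ioi u).indicator (fun v => M₂ (g v - g u) * f v * deriv g v) v
                ∂(volume.restrict (Ioc x b)) := by
          show (∫ v in u..b, M₂ (g v - g u) * f v * deriv g v) = _
          rw [intervalIntegral.integral_of_le hu.2,
            MeasureTheory.integral_indicator measurableSet_Ioi,
            Measure.restrict_restrict measurableSet_Ioi,
            show Ioi u ∩ Ioc x b = Ioc u b from by rw [inter_comm]; exact hIocinter u hu]
        have h2 : (∫ v, H u v ∂(volume.restrict (Ioc x b))) = M₁ (g u - g x) *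
            ((∫ v, (Ioi u).indicator (fun v => M₂ (g v - g u) * f v * deriv g v) v
                ∂(volume.restrict (Ioc x b))) *
              deriv g u) := by
          simp only [H]
          rw [MeasureTheory.integral_const_mul, MeasureTheory.integral_mul_const]
        rw [hKu, h2]
        ring
    _ = ∫ v, (∫ u, H u v ∂μ) ∂μ := MeasureTheory.integral_integral_swap hHint
    _ = ∫ v, lconv M₁ M₂ (g v - g x) * f v * deriv g v ∂μ := by
        rw [hμdef]
        apply setIntegral_congr_fun measurableSet_Ioc
        intro v hv
        dsimp only
        have hvI : v ∈ Icc a b := huIcc v hv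
        have hwpos : 0 < g v - g x := sub_pos.mpr (hg hxI hvI hv.1)
        have hHv : (fun u => H u v) = fun u =>
            (Iio v).indicator (fun u => M₁ (g u - g x) * M₂ (g v - g u) * deriv g u) u *
              (f v * deriv g v) := by
          funext u
          by_cases h : u < v <;>
            (simp [H, indicator_apply, mem_Ioi, mem_Iio, h]; try ring)
        rw [hHv, MeasureTheory.integral_mul_const,
          MeasureTheory.integral_indicator measurableSet_Iio,
          Measure.restrict_restrict measurableSet_Iio,
          show Iio v ∩ Ioc x b = Ioo x v from by
            ext t
            simp only [mem_inter_iff, mem_Iio, mem_Ioc, mem_Ioo]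
            constructor
            · rintro ⟨h1, h2, h3⟩; exact ⟨h2, h1⟩
            · rintro ⟨h1, h2⟩; exact ⟨h2, h1, h2.le.trans hv.2⟩]
        have hlc : lconv M₁ M₂ (g v - g x)
            = ∫ u in Ioo x v, M₁ (g u - g x) * M₂ (g v - g u) * deriv g u := by
          have hrefl := intervalIntegral.integral_comp_sub_left
            (a := (0:ℝ)) (b := g v - g x)
            (fun z => M₁ z * M₂ (g v - g x - z)) (g v - g x)
          simp only [sub_self, sub_zero, sub_sub_cancel] at hrefl
          show (∫ z in (0:ℝ)..(g v - g x), M₁ (g v - g x - z) * M₂ z) = _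
          rw [hrefl, intervalIntegral.integral_of_le hwpos.le,
            MeasureTheory.integral_Ioc_eq_integral_Ioo,
            hsub_eq x hxI v hvI hv.1.le (fun z => M₁ z * M₂ (g v - g x - z))]
          apply setIntegral_congr_fun measurableSet_Ioo
          intro u hu
          show M₁ (g u - g x) * M₂ (g v - g x - (g u - g x)) * deriv g u = _
          rw [show g v - g x - (g u - g x) = g v - g u from by ring]
        rw [hlc]
        ring
end

section
/- Second fundamental theorem for the Caputo-type parametric GFD: let (M, K) be a Sonin pair with M, K continuous on (0,∞) and locally integrable at 0, let g : [a,b] → ℝ be strictly increasing with continuous nonvanishing derivative, and let f be continuously differentiable on [a, b]. Then (I_{a+,g}^{(M)} (D_{a+,g}^{(K),*} f))(x) = f(x) - f(a) for all x in (a, b]. -/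
open Set intervalIntegral MeasureTheory

/-- An indicator of a continuous-on-an-open-set function is measurable. -/
lemma measurable_indicator_of_continuousOn {s : Set ℝ} (hs : IsOpen s) {f : ℝ → ℝ}
    (hf : ContinuousOn f s) : Measurable (s.indicator f) := by
  classical
  refine measurable_of_isOpen fun V hV => ?_
  have hmain : MeasurableSet (s ∩ f ⁻¹' V) := (hf.isOpen_inter_preimage hs hV).measurableSet
  by_cases h0 : (0 : ℝ) ∈ V
  · have : s.indicator f ⁻¹' V = (s ∩ f ⁻¹' V) ∪ sᶜ := by
      ext z; by_cases hz : z ∈ s <;> simp [Set.indicator, hz, h0]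
    rw [this]; exact hmain.union hs.measurableSet.compl
  · have : s.indicator f ⁻¹' V = s ∩ f ⁻¹' V := by
      ext z; by_cases hz : z ∈ s <;> simp [Set.indicator, hz, h0]
    rw [this]; exact hmain

/-- Core version of the theorem, with measurable kernels vanishing on nonpositive arguments. -/
theorem second_FT_key (M K : ℝ → ℝ)
    (hM : Measurable M) (hK : Measurable K)
    (hK0 : ∀ z : ℝ, z ≤ 0 → K z = 0)
    (hSonin : ∀ x : ℝ, 0 < x → (∫ z in (0 : ℝ)..x, M (x - z) * K z) = 1)
    (hMi : ∀ T > 0, IntervalIntegrable M MeasureTheory.volume 0 T)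
    (hKi : ∀ T > 0, IntervalIntegrable K MeasureTheory.volume 0 T)
    (a b : ℝ) (hab : a < b) (g : ℝ → ℝ)
    (hg : StrictMonoOn g (Icc a b))
    (hgd : ∀ x ∈ Icc a b, HasDerivAt g (deriv g x) x)
    (hg' : ContinuousOn (deriv g) (Icc a b))
    (hg0 : ∀ x ∈ Icc a b, deriv g x ≠ 0)
    (f : ℝ → ℝ) (hf : ContDiffOn ℝ 1 f (Icc a b)) :
    ∀ x ∈ Ioc a b,
      (∫ u in a..x,
        M (g x - g u) * (∫ v in a..u, K (g u - g v) * deriv f v) * deriv g u)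
        = f x - f a := by
  rintro x ⟨hax, hxb⟩
  have hax' : a ≤ x := hax.le
  have hmema : a ∈ Icc a b := ⟨le_rfl, hab.le⟩
  have hmemb : b ∈ Icc a b := ⟨hab.le, le_rfl⟩
  have hmemx : x ∈ Icc a b := ⟨hax', hxb⟩
  have hIccx : Icc a x ⊆ Icc a b := Icc_subset_Icc le_rfl hxb
  have hIocx : Ioc a x ⊆ Icc a b := fun t ht => ⟨ht.1.le, ht.2.trans hxb⟩
  have gc : ContinuousOn g (Icc a b) := fun u hu => (hgd u hu).continuousAt.continuousWithinAt
  -- positivity of `deriv g`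
  have gpos : ∀ u ∈ Icc a b, 0 < deriv g u := by
    have hconn : IsPreconnected (deriv g '' Icc a b) := (isPreconnected_Icc).image _ hg'
    have hcover : deriv g '' Icc a b ⊆ Iio 0 ∪ Ioi 0 := by
      rintro _ ⟨u, hu, rfl⟩
      rcases (hg0 u hu).lt_or_gt with h | h
      · exact Or.inl h
      · exact Or.inr h
    rcases hconn.subset_or_subset isOpen_Iio isOpen_Ioi
        (disjoint_left.2 fun z hz hz' => absurd hz' (not_lt.2 hz.le)) hcover with h | h
    · exfalso
      have hanti : StrictAntiOn g (Icc a b) := by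
        refine strictAntiOn_of_deriv_neg (convex_Icc a b) gc fun u hu => ?_
        exact h (mem_image_of_mem _ (interior_subset hu))
      exact absurd (hg hmema hmemb hab) (not_lt.2 (hanti hmema hmemb hab).le)
    · exact fun u hu => h (mem_image_of_mem _ hu)
  -- lower bound on deriv g
  obtain ⟨c, hc, hcmin⟩ := isCompact_Icc.exists_isMinOn (nonempty_Icc.mpr hab.le) hg'
  set m : ℝ := deriv g c with hmdef
  have hm : 0 < m := gpos c hc
  have hmle : ∀ u ∈ Icc a b, m ≤ deriv g u := fun u hu => hcmin hu
  -- derivative of f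
  have hud : UniqueDiffOn ℝ (Icc a b) := uniqueDiffOn_Icc hab
  have wc : ContinuousOn (derivWithin f (Icc a b)) (Icc a b) :=
    hf.continuousOn_derivWithin hud le_rfl
  obtain ⟨C₁, hC₁⟩ := isCompact_Icc.exists_bound_of_continuousOn wc
  have hC₁0 : 0 ≤ C₁ := le_trans (norm_nonneg _) (hC₁ a hmema)
  have hw : ∀ v ∈ Ioo a b, deriv f v = derivWithin f (Icc a b) v := fun v hv =>
    (derivWithin_of_mem_nhds (Icc_mem_nhds hv.1 hv.2)).symm
  have hfd : ∀ v ∈ Ioo a b, HasDerivAt f (deriv f v) v := by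
    intro v hv
    exact (((hf.differentiableOn one_ne_zero) v (Ioo_subset_Icc_self hv)).differentiableAt
      (Icc_mem_nhds hv.1 hv.2)).hasDerivAt
  have hfb : ∀ v ∈ Ioo a b, ‖deriv f v‖ ≤ C₁ := by
    intro v hv; rw [hw v hv]; exact hC₁ v (Ioo_subset_Icc_self hv)
  -- Sonin integrability
  have hSi : ∀ t : ℝ, 0 < t → IntegrableOn (fun z => M (t - z) * K z) (Ioc 0 t) := by
    intro t ht
    by_contra hcon
    have h1 : ¬ IntervalIntegrable (fun z => M (t - z) * K z) volume 0 t := by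
      rw [intervalIntegrable_iff_integrableOn_Ioc_of_le ht.le]; exact hcon
    exact one_ne_zero ((hSonin t ht).symm.trans (intervalIntegral.integral_undef h1))
  -- image of Ioc under g
  have himg : ∀ v u, a ≤ v → v ≤ u → u ≤ b → g '' Ioc v u = Ioc (g v) (g u) := by
    intro v u hv hvu hub
    have hsub : Icc v u ⊆ Icc a b := Icc_subset_Icc hv hub
    refine Subset.antisymm ?_ (intermediate_value_Ioc hvu (gc.mono hsub))
    rintro _ ⟨t, ht, rfl⟩
    have htm : t ∈ Icc a b := hsub ⟨ht.1.le, ht.2⟩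
    exact ⟨hg ⟨hv, hvu.trans hub⟩ htm ht.1,
      hg.monotoneOn htm (hsub ⟨hvu, le_rfl⟩) ht.2⟩
  have hgm : MonotoneOn g (Icc a b) := hg.monotoneOn
  -- the inner Sonin identity
  have hSonin2 : ∀ v, a ≤ v → v < x →
      (∫ u in Ioc v x, M (g x - g u) * (K (g u - g v) * deriv g u)) = 1 := by
    intro v hv hvx
    have hvb : v ∈ Icc a b := ⟨hv, hvx.le.trans hxb⟩
    have hsub : Ioc v x ⊆ Icc a b := fun t ht => ⟨hv.trans ht.1.le, ht.2.trans hxb⟩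
    have hinj : InjOn g (Ioc v x) := hg.injOn.mono hsub
    have hder : ∀ u ∈ Ioc v x, HasDerivWithinAt g (deriv g u) (Ioc v x) u :=
      fun u hu => (hgd u (hsub hu)).hasDerivWithinAt
    have himg' : g '' Ioc v x = Ioc (g v) (g x) := himg v x hv hvx.le hxb
    have hgvx : g v < g x := hg hvb hmemx hvx
    have h1 := integral_image_eq_integral_abs_deriv_smul measurableSet_Ioc hder hinj
      (fun t => M (g x - t) * K (t - g v))
    rw [himg'] at h1
    have h2 : EqOn (fun u => |deriv g u| • (M (g x - g u) * K (g u - g v)))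
        (fun u => M (g x - g u) * (K (g u - g v) * deriv g u)) (Ioc v x) := by
      intro u hu
      simp only [smul_eq_mul, abs_of_pos (gpos u (hsub hu))]
      ring
    rw [setIntegral_congr_fun measurableSet_Ioc h2] at h1
    rw [← h1, ← intervalIntegral.integral_of_le hgvx.le]
    have h4 := intervalIntegral.integral_comp_add_right (a := 0) (b := g x - g v)
      (fun t => M (g x - t) * K (t - g v)) (g v)
    have e1 : (0 : ℝ) + g v = g v := by ring
    have e2 : g x - g v + g v = g x := by ring
    rw [e1, e2] at h4
    rw [← h4]
    have h5 : (∫ z in (0:ℝ)..(g x - g v),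
        M (g x - (z + g v)) * K (z + g v - g v)) =
        ∫ z in (0:ℝ)..(g x - g v), M ((g x - g v) - z) * K z := by
      refine intervalIntegral.integral_congr fun z _ => ?_
      rw [show g x - (z + g v) = g x - g v - z from by ring,
        show z + g v - g v = z from by ring]
    rw [h5]
    exact hSonin _ (by linarith)
  -- interval integrability of |K (g u - ·)| on (g a, g u]
  have hKabs : ∀ u, a < u → u ≤ b →
      IntegrableOn (fun s => ‖K (g u - s)‖) (Ioc (g a) (g u)) := by
    intro u hau hub
    have hub' : u ∈ Icc a b := ⟨hau.le, hub⟩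
    have hgau : g a < g u := hg hmema hub' hau
    have h1 : IntervalIntegrable (fun s => ‖K (g u - s)‖) volume (g u - 0) (g u - (g u - g a)) :=
      ((hKi (g u - g a) (by linarith)).norm).comp_sub_left (g u)
    rw [sub_zero, sub_sub_cancel] at h1
    rw [← intervalIntegrable_iff_integrableOn_Ioc_of_le hgau.le]
    exact h1.symm
  -- integrability with the derivative weight
  have hKw : ∀ u, a < u → u ≤ b →
      IntegrableOn (fun v => |deriv g v| • ‖K (g u - g v)‖) (Ioc a u) := by
    intro u hau hub
    have hsub : Ioc a u ⊆ Icc a b := fun t ht => ⟨ht.1.le, ht.2.trans hub⟩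
    have hder : ∀ v ∈ Ioc a u, HasDerivWithinAt g (deriv g v) (Ioc a u) v :=
      fun v hv => (hgd v (hsub hv)).hasDerivWithinAt
    have := (integrableOn_image_iff_integrableOn_abs_deriv_smul measurableSet_Ioc hder
      (hg.injOn.mono hsub) (fun s => ‖K (g u - s)‖)).mp
    rw [himg a u le_rfl hau.le hub] at this
    exact this (hKabs u hau hub)
  -- a.e. measurability of the K-factor
  have hgae : AEMeasurable g (volume.restrict (Icc a b)) := gc.aemeasurable measurableSet_Icc
  have hKaem : ∀ u, a < u → u ≤ b →
      AEStronglyMeasurable (fun v => K (g u - g v) * deriv f v) (volume.restrict (Ioc a u)) := by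
    intro u hau hub
    have hsub : Ioc a u ⊆ Icc a b := fun t ht => ⟨ht.1.le, ht.2.trans hub⟩
    have h1 : AEMeasurable g (volume.restrict (Ioc a u)) :=
      hgae.mono_measure (Measure.restrict_mono hsub le_rfl)
    exact ((hK.comp_aemeasurable (aemeasurable_const.sub h1)).mul
      (measurable_deriv f).aemeasurable).aestronglyMeasurable
  -- integrability of the inner integrand
  have hKint : ∀ u, a < u → u ≤ b →
      IntegrableOn (fun v => K (g u - g v) * deriv f v) (Ioc a u) := by
    intro u hau hub
    refine Integrable.mono' (((hKw u hau hub).const_mul (C₁ * m⁻¹))) (hKaem u hau hub) ?_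
    rw [Measure.restrict_congr_set Ioo_ae_eq_Ioc.symm]
    filter_upwards [ae_restrict_mem measurableSet_Ioo] with v hv
    have hvb : v ∈ Ioo a b := ⟨hv.1, hv.2.trans_le hub⟩
    have h1 : m ≤ deriv g v := hmle v (Ioo_subset_Icc_self hvb)
    have h2 : ‖deriv f v‖ ≤ C₁ := hfb v hvb
    have h3 : (0:ℝ) ≤ ‖K (g u - g v)‖ := norm_nonneg _
    have habs : |deriv g v| = deriv g v := abs_of_pos (gpos v (Ioo_subset_Icc_self hvb))
    rw [norm_mul, smul_eq_mul, habs]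
    have hmi : m⁻¹ * m = 1 := inv_mul_cancel₀ hm.ne'
    calc ‖K (g u - g v)‖ * ‖deriv f v‖ ≤ ‖K (g u - g v)‖ * C₁ :=
          mul_le_mul_of_nonneg_left h2 h3
      _ = C₁ * m⁻¹ * (m * ‖K (g u - g v)‖) := by
          rw [show C₁ * m⁻¹ * (m * ‖K (g u - g v)‖)
              = C₁ * ‖K (g u - g v)‖ * (m⁻¹ * m) from by ring, hmi, mul_one, mul_comm]
      _ ≤ C₁ * m⁻¹ * (deriv g v * ‖K (g u - g v)‖) := by
          exact mul_le_mul_of_nonneg_left (mul_le_mul_of_nonneg_right h1 h3)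
            (mul_nonneg hC₁0 (inv_nonneg.2 hm.le))

  -- total mass of |K|
  have hgab : g a < g b := hg hmema hmemb hab
  set CK : ℝ := ∫ z in Ioc (0:ℝ) (g b - g a), ‖K z‖ with hCKdef
  have hKT : IntegrableOn (fun z => ‖K z‖) (Ioc 0 (g b - g a)) := by
    rw [← intervalIntegrable_iff_integrableOn_Ioc_of_le (by linarith : (0:ℝ) ≤ g b - g a)]
    exact (hKi _ (by linarith)).norm
  have hKbd : ∀ u, a < u → u ≤ b →
      (∫ v in Ioc a u, ‖K (g u - g v) * deriv f v‖) ≤ C₁ * m⁻¹ * CK := by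
    intro u hau hub
    have hub' : u ∈ Icc a b := ⟨hau.le, hub⟩
    have hgau : g a < g u := hg hmema hub' hau
    have hsub : Ioc a u ⊆ Icc a b := fun t ht => ⟨ht.1.le, ht.2.trans hub⟩
    have hder : ∀ v ∈ Ioc a u, HasDerivWithinAt g (deriv g v) (Ioc a u) v :=
      fun v hv => (hgd v (hsub hv)).hasDerivWithinAt
    have hA := integral_image_eq_integral_abs_deriv_smul measurableSet_Ioc hder
      (hg.injOn.mono hsub) (fun s => ‖K (g u - s)‖)
    rw [himg a u le_rfl hau.le hub] at hA
    have hB : (∫ s in Ioc (g a) (g u), ‖K (g u - s)‖) = ∫ z in Ioc (0:ℝ) (g u - g a), ‖K z‖ := by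
      rw [← intervalIntegral.integral_of_le hgau.le,
        intervalIntegral.integral_comp_sub_left (fun z => ‖K z‖) (g u), sub_self,
        intervalIntegral.integral_of_le (by linarith : (0:ℝ) ≤ g u - g a)]
    have hC : (∫ z in Ioc (0:ℝ) (g u - g a), ‖K z‖) ≤ CK := by
      refine setIntegral_mono_set hKT (Filter.Eventually.of_forall fun z => norm_nonneg _) ?_
      refine HasSubset.Subset.eventuallyLE (Ioc_subset_Ioc le_rfl ?_)
      have := hgm hub' hmemb hub
      linarith
    have hD : (∫ v in Ioc a u, ‖K (g u - g v) * deriv f v‖)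
        ≤ ∫ v in Ioc a u, C₁ * m⁻¹ * (|deriv g v| • ‖K (g u - g v)‖) := by
      refine integral_mono_ae ((hKint u hau hub).norm) ((hKw u hau hub).const_mul _) ?_
      rw [Measure.restrict_congr_set Ioo_ae_eq_Ioc.symm]
      filter_upwards [ae_restrict_mem measurableSet_Ioo] with v hv
      have hvb : v ∈ Ioo a b := ⟨hv.1, hv.2.trans_le hub⟩
      have h1 : m ≤ deriv g v := hmle v (Ioo_subset_Icc_self hvb)
      have h2 : ‖deriv f v‖ ≤ C₁ := hfb v hvb
      have h3 : (0:ℝ) ≤ ‖K (g u - g v)‖ := norm_nonneg _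
      have habs : |deriv g v| = deriv g v := abs_of_pos (gpos v (Ioo_subset_Icc_self hvb))
      rw [norm_mul, smul_eq_mul, habs]
      have hmi : m⁻¹ * m = 1 := inv_mul_cancel₀ hm.ne'
      calc ‖K (g u - g v)‖ * ‖deriv f v‖ ≤ ‖K (g u - g v)‖ * C₁ :=
            mul_le_mul_of_nonneg_left h2 h3
        _ = C₁ * m⁻¹ * (m * ‖K (g u - g v)‖) := by
            rw [show C₁ * m⁻¹ * (m * ‖K (g u - g v)‖)
                = C₁ * ‖K (g u - g v)‖ * (m⁻¹ * m) from by ring, hmi, mul_one, mul_comm]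
        _ ≤ C₁ * m⁻¹ * (deriv g v * ‖K (g u - g v)‖) :=
            mul_le_mul_of_nonneg_left (mul_le_mul_of_nonneg_right h1 h3)
              (mul_nonneg hC₁0 (inv_nonneg.2 hm.le))
    calc (∫ v in Ioc a u, ‖K (g u - g v) * deriv f v‖)
        ≤ ∫ v in Ioc a u, C₁ * m⁻¹ * (|deriv g v| • ‖K (g u - g v)‖) := hD
      _ = C₁ * m⁻¹ * ∫ v in Ioc a u, |deriv g v| • ‖K (g u - g v)‖ := integral_const_mul _ _
      _ = C₁ * m⁻¹ * ∫ z in Ioc (0:ℝ) (g u - g a), ‖K z‖ := by rw [← hA, hB]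
      _ ≤ C₁ * m⁻¹ * CK :=
          mul_le_mul_of_nonneg_left hC (mul_nonneg hC₁0 (inv_nonneg.2 hm.le))
  -- M side integrability
  have hgax : g a < g x := hg hmema hmemx hax
  have hMw : IntegrableOn (fun u => |deriv g u| • ‖M (g x - g u)‖) (Ioc a x) := by
    have hder : ∀ u ∈ Ioc a x, HasDerivWithinAt g (deriv g u) (Ioc a x) u :=
      fun u hu => (hgd u (hIocx hu)).hasDerivWithinAt
    have hMabs : IntegrableOn (fun t => ‖M (g x - t)‖) (Ioc (g a) (g x)) := by
      have h1 : IntervalIntegrable (fun t => ‖M (g x - t)‖) volume (g x - 0)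
          (g x - (g x - g a)) := ((hMi (g x - g a) (by linarith)).norm).comp_sub_left (g x)
      rw [sub_zero, sub_sub_cancel] at h1
      rw [← intervalIntegrable_iff_integrableOn_Ioc_of_le hgax.le]
      exact h1.symm
    have h2 := (integrableOn_image_iff_integrableOn_abs_deriv_smul measurableSet_Ioc hder
      (hg.injOn.mono hIocx) (fun t => ‖M (g x - t)‖)).mp
    rw [himg a x le_rfl hax' hxb] at h2
    exact h2 hMabs
  -- measurability of the product integrand
  have hFm : AEStronglyMeasurable
      (Function.uncurry fun u v =>
        M (g x - g u) * (K (g u - g v) * deriv f v) * deriv g u)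
      ((volume.restrict (Ioc a x)).prod (volume.restrict (Ioc a x))) := by
    rw [Measure.prod_restrict]
    have hprodsub : (Ioc a x ×ˢ Ioc a x : Set (ℝ × ℝ)) ⊆ Icc a b ×ˢ Icc a b :=
      prod_mono hIocx hIocx
    have h1 : AEMeasurable (fun p : ℝ × ℝ => g p.1)
        ((volume.prod volume).restrict (Icc a b ×ˢ Icc a b)) :=
      ContinuousOn.aemeasurable (gc.comp continuousOn_fst fun p hp => hp.1)
        (measurableSet_Icc.prod measurableSet_Icc)
    have h2 : AEMeasurable (fun p : ℝ × ℝ => g p.2)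
        ((volume.prod volume).restrict (Icc a b ×ˢ Icc a b)) :=
      ContinuousOn.aemeasurable (gc.comp continuousOn_snd fun p hp => hp.2)
        (measurableSet_Icc.prod measurableSet_Icc)
    have h1' := h1.mono_measure (Measure.restrict_mono hprodsub le_rfl)
    have h2' := h2.mono_measure (Measure.restrict_mono hprodsub le_rfl)
    refine AEMeasurable.aestronglyMeasurable ?_
    exact ((hM.comp_aemeasurable (aemeasurable_const.sub h1')).mul
      ((hK.comp_aemeasurable (h1'.sub h2')).mul
        (((measurable_deriv f).comp measurable_snd).aemeasurable))).mul
      (((measurable_deriv g).comp measurable_fst).aemeasurable)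
  -- integrability in v for each u
  have hIu : ∀ u, u ∈ Ioc a x → IntegrableOn
      (fun v => M (g x - g u) * (K (g u - g v) * deriv f v) * deriv g u) (Ioc a x) := by
    intro u hu
    have h1 : IntegrableOn
        (fun v => M (g x - g u) * (K (g u - g v) * deriv f v) * deriv g u) (Ioc a u) :=
      ((hKint u hu.1 (hu.2.trans hxb)).const_mul (M (g x - g u))).mul_const (deriv g u)
    have h2 : IntegrableOn
        (fun v => M (g x - g u) * (K (g u - g v) * deriv f v) * deriv g u) (Ioc u x) := by
      have hz : EqOn (fun _ : ℝ => (0:ℝ))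
          (fun v => M (g x - g u) * (K (g u - g v) * deriv f v) * deriv g u) (Ioc u x) := by
        intro v hv
        have hlt : g u < g v := hg (hIocx hu) ⟨hu.1.le.trans hv.1.le, hv.2.trans hxb⟩ hv.1
        simp [hK0 (g u - g v) (by linarith)]
      exact integrableOn_zero.congr_fun hz measurableSet_Ioc
    have h3 := h1.union h2
    rwa [Ioc_union_Ioc_eq_Ioc hu.1.le hu.2] at h3
  -- value of the inner integral
  have hval : ∀ u, u ∈ Ioc a x →
      (∫ v in Ioc a x, M (g x - g u) * (K (g u - g v) * deriv f v) * deriv g u)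
        = M (g x - g u) * (∫ v in a..u, K (g u - g v) * deriv f v) * deriv g u := by
    intro u hu
    have h1 := (hIu u hu).mono_set (Ioc_subset_Ioc le_rfl hu.2)
    have h2 := (hIu u hu).mono_set (Ioc_subset_Ioc hu.1.le le_rfl)
    rw [← Ioc_union_Ioc_eq_Ioc hu.1.le hu.2,
      setIntegral_union (Ioc_disjoint_Ioc_of_le le_rfl) measurableSet_Ioc h1 h2]
    have hz : EqOn (fun v => M (g x - g u) * (K (g u - g v) * deriv f v) * deriv g u)
        (fun _ : ℝ => (0:ℝ)) (Ioc u x) := by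
      intro v hv
      have hlt : g u < g v := hg (hIocx hu) ⟨hu.1.le.trans hv.1.le, hv.2.trans hxb⟩ hv.1
      simp [hK0 (g u - g v) (by linarith)]
    rw [setIntegral_congr_fun measurableSet_Ioc hz, MeasureTheory.integral_zero _ _, add_zero,
      intervalIntegral.integral_of_le hu.1.le, MeasureTheory.integral_mul_const, MeasureTheory.integral_const_mul]
  -- Fubini
  have hFint : Integrable
      (Function.uncurry fun u v =>
        M (g x - g u) * (K (g u - g v) * deriv f v) * deriv g u)
      ((volume.restrict (Ioc a x)).prod (volume.restrict (Ioc a x))) := by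
    rw [integrable_prod_iff hFm]
    constructor
    · filter_upwards [ae_restrict_mem measurableSet_Ioc] with u hu
      exact hIu u hu
    · refine Integrable.mono' (hMw.const_mul (C₁ * m⁻¹ * CK))
        hFm.norm.integral_prod_right' ?_
      filter_upwards [ae_restrict_mem measurableSet_Ioc] with u hu
      have hub : u ≤ b := hu.2.trans hxb
      have hnn : (0:ℝ) ≤ ∫ v in Ioc a x,
          ‖M (g x - g u) * (K (g u - g v) * deriv f v) * deriv g u‖ :=
        integral_nonneg fun v => norm_nonneg _
      simp only [Function.uncurry_apply_pair]
      rw [Real.norm_of_nonneg hnn]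
      have hsplit : (∫ v in Ioc a x,
          ‖M (g x - g u) * (K (g u - g v) * deriv f v) * deriv g u‖)
          = ∫ v in Ioc a u,
          ‖M (g x - g u) * (K (g u - g v) * deriv f v) * deriv g u‖ := by
        rw [← Ioc_union_Ioc_eq_Ioc hu.1.le hu.2,
          setIntegral_union (Ioc_disjoint_Ioc_of_le le_rfl) measurableSet_Ioc
            (MeasureTheory.IntegrableOn.mono_set ((hIu u hu).norm) (Ioc_subset_Ioc le_rfl hu.2))
            (MeasureTheory.IntegrableOn.mono_set ((hIu u hu).norm) (Ioc_subset_Ioc hu.1.le le_rfl))]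
        have hz : EqOn
            (fun v => ‖M (g x - g u) * (K (g u - g v) * deriv f v) * deriv g u‖)
            (fun _ : ℝ => (0:ℝ)) (Ioc u x) := by
          intro v hv
          have hlt : g u < g v := hg (hIocx hu) ⟨hu.1.le.trans hv.1.le, hv.2.trans hxb⟩ hv.1
          simp [hK0 (g u - g v) (by linarith)]
        rw [setIntegral_congr_fun measurableSet_Ioc hz, MeasureTheory.integral_zero _ _, add_zero]
      rw [hsplit]
      have hnorm : EqOn
          (fun v => ‖M (g x - g u) * (K (g u - g v) * deriv f v) * deriv g u‖)
          (fun v => ‖M (g x - g u)‖ * ‖K (g u - g v) * deriv f v‖ * ‖deriv g u‖)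
          (Ioc a u) := by
        intro v _
        simp [norm_mul]
      rw [setIntegral_congr_fun measurableSet_Ioc hnorm, MeasureTheory.integral_mul_const,
        MeasureTheory.integral_const_mul]
      have hKb := hKbd u hu.1 hub
      have e1 : ‖deriv g u‖ = |deriv g u| := Real.norm_eq_abs _
      have e2 : (0:ℝ) ≤ ‖M (g x - g u)‖ := norm_nonneg _
      have e3 : (0:ℝ) ≤ |deriv g u| := abs_nonneg _
      have e4 : (0:ℝ) ≤ ∫ v in Ioc a u, ‖K (g u - g v) * deriv f v‖ :=
        integral_nonneg fun v => norm_nonneg _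
      rw [e1, smul_eq_mul]
      calc ‖M (g x - g u)‖ * (∫ v in Ioc a u, ‖K (g u - g v) * deriv f v‖) * |deriv g u|
          ≤ ‖M (g x - g u)‖ * (C₁ * m⁻¹ * CK) * |deriv g u| :=
            mul_le_mul_of_nonneg_right (mul_le_mul_of_nonneg_left hKb e2) e3
        _ = C₁ * m⁻¹ * CK * (|deriv g u| * ‖M (g x - g u)‖) := by ring
  have hswap := integral_integral_swap
    (f := fun u v => M (g x - g u) * (K (g u - g v) * deriv f v) * deriv g u) hFint
  rw [intervalIntegral.integral_of_le hax']
  have hLHS : (∫ u in Ioc a x,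
      M (g x - g u) * (∫ v in a..u, K (g u - g v) * deriv f v) * deriv g u)
      = ∫ u in Ioc a x, ∫ v in Ioc a x,
        M (g x - g u) * (K (g u - g v) * deriv f v) * deriv g u :=
    setIntegral_congr_fun measurableSet_Ioc fun u hu => (hval u hu).symm
  rw [hLHS, hswap]
  -- evaluate the swapped integral
  have haeInt := MeasureTheory.Integrable.prod_left_ae (μ := volume.restrict (Ioc a x)) (ν := volume.restrict (Ioc a x)) hFint
  have hnex : ∀ᵐ v : ℝ ∂(volume.restrict (Ioc a x)), v ≠ x := by
    refine ae_restrict_of_ae ?_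
    rw [MeasureTheory.ae_iff]
    have : {v : ℝ | ¬ v ≠ x} = {x} := by ext z; simp
    rw [this]
    exact measure_singleton x
  have hfinal : (∫ v in Ioc a x, ∫ u in Ioc a x,
      M (g x - g u) * (K (g u - g v) * deriv f v) * deriv g u)
      = ∫ v in Ioc a x, deriv f v := by
    refine integral_congr_ae ?_
    filter_upwards [haeInt, hnex, ae_restrict_mem measurableSet_Ioc] with v hvint hvne hv
    have hvx : v < x := lt_of_le_of_ne hv.2 hvne
    have hvicc : v ∈ Icc a b := ⟨hv.1.le, hvx.le.trans hxb⟩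
    have h1 : IntegrableOn
        (fun u => M (g x - g u) * (K (g u - g v) * deriv f v) * deriv g u) (Ioc a v) :=
      MeasureTheory.IntegrableOn.mono_set hvint (Ioc_subset_Ioc le_rfl hvx.le)
    have h2 : IntegrableOn
        (fun u => M (g x - g u) * (K (g u - g v) * deriv f v) * deriv g u) (Ioc v x) :=
      MeasureTheory.IntegrableOn.mono_set hvint (Ioc_subset_Ioc hv.1.le le_rfl)
    rw [show (∫ u in Ioc a x, M (g x - g u) * (K (g u - g v) * deriv f v) * deriv g u)
        = (∫ u in Ioc a v, M (g x - g u) * (K (g u - g v) * deriv f v) * deriv g u)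
          + ∫ u in Ioc v x, M (g x - g u) * (K (g u - g v) * deriv f v) * deriv g u from by
      rw [← Ioc_union_Ioc_eq_Ioc hv.1.le hv.2,
        setIntegral_union (Ioc_disjoint_Ioc_of_le le_rfl) measurableSet_Ioc h1 h2]]
    have hz : EqOn (fun u => M (g x - g u) * (K (g u - g v) * deriv f v) * deriv g u)
        (fun _ : ℝ => (0:ℝ)) (Ioc a v) := by
      intro u hu
      have hle : g u ≤ g v := hgm ⟨hu.1.le, (hu.2.trans hvx.le).trans hxb⟩ hvicc hu.2
      simp [hK0 (g u - g v) (by linarith)]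
    rw [setIntegral_congr_fun measurableSet_Ioc hz, MeasureTheory.integral_zero _ _, zero_add]
    have hcongr : EqOn (fun u => M (g x - g u) * (K (g u - g v) * deriv f v) * deriv g u)
        (fun u => deriv f v * (M (g x - g u) * (K (g u - g v) * deriv g u))) (Ioc v x) :=
      fun u _ => by ring
    rw [setIntegral_congr_fun measurableSet_Ioc hcongr, MeasureTheory.integral_const_mul,
      hSonin2 v hv.1.le hvx, mul_one]
  rw [hfinal]
  -- FTC
  have hfi : IntervalIntegrable (deriv f) volume a x := by
    rw [intervalIntegrable_iff_integrableOn_Ioc_of_le hax']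
    have h1 : IntegrableOn (derivWithin f (Icc a b)) (Ioc a x) :=
      ((wc.mono hIccx).integrableOn_Icc).mono_set Ioc_subset_Icc_self
    refine h1.congr ?_
    rw [show volume.restrict (Ioc a x) = volume.restrict (Ioo a x) from
      (Measure.restrict_congr_set Ioo_ae_eq_Ioc).symm]
    filter_upwards [ae_restrict_mem measurableSet_Ioo] with v hv
    exact (hw v ⟨hv.1, hv.2.trans_le hxb⟩).symm
  rw [← intervalIntegral.integral_of_le hax']
  exact integral_eq_sub_of_hasDeriv_right_of_le hax' (hf.continuousOn.mono hIccx)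
    (fun v hv => (hfd v ⟨hv.1, hv.2.trans_le hxb⟩).hasDerivWithinAt) hfi

/-- Second fundamental theorem of parametric GFC for the Caputo-type parametric GFD:
`I_{a+,g}^{(M)} D_{a+,g}^{(K),*} f = f - f(a)`. -/
theorem second_FT_parametric_GFD_Caputo (M K : ℝ → ℝ)
    (hSonin : ∀ x : ℝ, 0 < x → (∫ z in (0 : ℝ)..x, M (x - z) * K z) = 1)
    (hMc : ContinuousOn M (Ioi 0)) (hKc : ContinuousOn K (Ioi 0))
    (hMi : ∀ T > 0, IntervalIntegrable M MeasureTheory.volume 0 T)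
    (hKi : ∀ T > 0, IntervalIntegrable K MeasureTheory.volume 0 T)
    (a b : ℝ) (hab : a < b) (g : ℝ → ℝ)
    (hg : StrictMonoOn g (Icc a b))
    (hgd : ∀ x ∈ Icc a b, HasDerivAt g (deriv g x) x)
    (hg' : ContinuousOn (deriv g) (Icc a b))
    (hg0 : ∀ x ∈ Icc a b, deriv g x ≠ 0)
    (f : ℝ → ℝ) (hf : ContDiffOn ℝ 1 f (Icc a b)) :
    ∀ x ∈ Ioc a b,
      (∫ u in a..x,
        M (g x - g u) * (∫ v in a..u, K (g u - g v) * deriv f v) * deriv g u)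
        = f x - f a := by
  classical
  set M₁ := (Ioi (0:ℝ)).indicator M with hM₁def
  set K₁ := (Ioi (0:ℝ)).indicator K with hK₁def
  have hM₁ : Measurable M₁ := measurable_indicator_of_continuousOn isOpen_Ioi hMc
  have hK₁ : Measurable K₁ := measurable_indicator_of_continuousOn isOpen_Ioi hKc
  have hK₁0 : ∀ z : ℝ, z ≤ 0 → K₁ z = 0 := fun z hz =>
    Set.indicator_of_notMem (by simpa using not_lt.2 hz) K
  have hMe : ∀ z : ℝ, 0 < z → M₁ z = M z := fun z hz => Set.indicator_of_mem hz M
  have hKe : ∀ z : ℝ, 0 < z → K₁ z = K z := fun z hz => Set.indicator_of_mem hz K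
  have hM₁i : ∀ T > 0, IntervalIntegrable M₁ MeasureTheory.volume 0 T := by
    intro T hT
    rw [intervalIntegrable_iff_integrableOn_Ioc_of_le hT.le]
    exact ((intervalIntegrable_iff_integrableOn_Ioc_of_le hT.le).mp (hMi T hT)).congr_fun
      (fun z hz => (hMe z hz.1).symm) measurableSet_Ioc
  have hK₁i : ∀ T > 0, IntervalIntegrable K₁ MeasureTheory.volume 0 T := by
    intro T hT
    rw [intervalIntegrable_iff_integrableOn_Ioc_of_le hT.le]
    exact ((intervalIntegrable_iff_integrableOn_Ioc_of_le hT.le).mp (hKi T hT)).congr_fun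
      (fun z hz => (hKe z hz.1).symm) measurableSet_Ioc
  have hne : ∀ t : ℝ, ∀ᵐ z : ℝ ∂(MeasureTheory.volume), z ≠ t := by
    intro t
    rw [MeasureTheory.ae_iff]
    have h : {z : ℝ | ¬ z ≠ t} = {t} := by ext z; simp
    rw [h]
    exact measure_singleton t
  have hSonin₁ : ∀ t : ℝ, 0 < t → (∫ z in (0:ℝ)..t, M₁ (t - z) * K₁ z) = 1 := by
    intro t ht
    rw [← hSonin t ht]
    refine intervalIntegral.integral_congr_ae ?_
    filter_upwards [hne t] with z hz hzmem
    rw [uIoc_of_le ht.le] at hzmem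
    have h0z : (0:ℝ) < z := hzmem.1
    have hzt : z < t := lt_of_le_of_ne hzmem.2 hz
    rw [hMe _ (by linarith), hKe _ h0z]
  intro x hx
  have hkey := second_FT_key M₁ K₁ hM₁ hK₁ hK₁0 hSonin₁ hM₁i hK₁i a b hab g hg hgd hg' hg0
    f hf x hx
  rw [← hkey]
  obtain ⟨hax, hxb⟩ := hx
  refine intervalIntegral.integral_congr_ae ?_
  filter_upwards [hne x] with u hu humem
  rw [uIoc_of_le hax.le] at humem
  have hux : u < x := lt_of_le_of_ne humem.2 hu
  have hu_icc : u ∈ Icc a b := ⟨humem.1.le, hux.le.trans hxb⟩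
  have hgt : g u < g x := hg hu_icc ⟨hax.le, hxb⟩ hux
  have hMeq : M (g x - g u) = M₁ (g x - g u) := (hMe _ (by linarith)).symm
  have hinner : (∫ v in a..u, K (g u - g v) * deriv f v)
      = ∫ v in a..u, K₁ (g u - g v) * deriv f v := by
    refine intervalIntegral.integral_congr_ae ?_
    filter_upwards [hne u] with v hv hvmem
    rw [uIoc_of_le humem.1.le] at hvmem
    have hvu : v < u := lt_of_le_of_ne hvmem.2 hv
    have hgvu : g v < g u := hg ⟨hvmem.1.le, (hvu.le.trans hux.le).trans hxb⟩ hu_icc hvu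
    rw [hKe _ (by linarith)]
  rw [hMeq, hinner]
end
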